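/- arXiv:0810.3027 — 6 statements merged into one kernel-verified Lean document; each statement's English description precedes it below -/
import Mathlib

section
/- Let g : [0,∞) → ℝ be differentiable with g(0) = 0, g'(s) > 0 for all s ≥ 0, and g'(s) → ∞ as s → ∞. Define f(z) = ∑_{k=0}^∞ exp(−z·g(k)) for Re z > 0. Then for every ε > 0 there exists x₀ > 0 such that for all x ∈ (0, x₀) and all y ∈ ℝ, |f(x + iy)| ≤ (1 + ε)·∫_0^∞ exp(−x·g(s)) ds. (Pointwise upper bound of Theorem 1(ii).) -/
open Filter MeasureTheory Set

lemma iUnion_Ioc_nat : (⋃ n : ℕ, Ioc (n : ℝ) (n + 1)) = Ioi (0 : ℝ) := by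
  ext t
  simp only [mem_iUnion, mem_Ioc, mem_Ioi]
  constructor
  · rintro ⟨n, h1, _⟩
    have := n.cast_nonneg (α := ℝ)
    linarith
  · intro ht
    refine ⟨⌈t⌉₊ - 1, ?_, ?_⟩
    · have h1 : 1 ≤ ⌈t⌉₊ := Nat.one_le_ceil_iff.2 ht
      have h2 : (⌈t⌉₊ : ℝ) < t + 1 := Nat.ceil_lt_add_one ht.le
      rw [Nat.cast_sub h1]
      push_cast
      linarith
    · have h1 : 1 ≤ ⌈t⌉₊ := Nat.one_le_ceil_iff.2 ht
      rw [Nat.cast_sub h1]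
      push_cast
      have := Nat.le_ceil t
      linarith

/-- Pointwise upper bound of Theorem 1(ii): for every `ε > 0` there is `x₀ > 0` such that
for all `0 < x < x₀` and all `y : ℝ`,
`|∑_{k=0}^∞ exp(-(x+iy)·g(k))| ≤ (1+ε)·∫_0^∞ exp(-x·g(s)) ds`. -/
theorem stmt0 (g g' : ℝ → ℝ)
    (hg0 : g 0 = 0)
    (hderiv : ∀ s : ℝ, 0 ≤ s → HasDerivAt g (g' s) s)
    (hpos : ∀ s : ℝ, 0 ≤ s → 0 < g' s)
    (hinf : Tendsto g' atTop atTop) :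
    ∀ ε : ℝ, 0 < ε → ∃ x₀ : ℝ, 0 < x₀ ∧ ∀ x ∈ Set.Ioo (0:ℝ) x₀, ∀ y : ℝ,
      ‖∑' k : ℕ, Complex.exp (-((x:ℂ) + (y:ℂ) * Complex.I) * (g k : ℂ))‖ ≤
        (1 + ε) * ∫ s in Set.Ioi (0:ℝ), Real.exp (-x * g s) := by
  -- basic facts about g
  have hcont : ContinuousOn g (Ici 0) :=
    fun s hs => (hderiv s hs).continuousAt.continuousWithinAt
  have hdiff : DifferentiableOn ℝ g (interior (Ici (0:ℝ))) := by
    intro s hs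
    rw [interior_Ici] at hs
    exact ((hderiv s hs.le).differentiableAt).differentiableWithinAt
  have hsm : StrictMonoOn g (Ici 0) := by
    apply strictMonoOn_of_deriv_pos (convex_Ici 0) hcont
    intro s hs
    rw [interior_Ici] at hs
    rw [(hderiv s hs.le).deriv]
    exact hpos s hs.le
  have hmono : MonotoneOn g (Ici 0) := hsm.monotoneOn
  have hgnn : ∀ s : ℝ, 0 ≤ s → 0 ≤ g s := by
    intro s hs
    rw [← hg0]
    exact hmono (self_mem_Ici) hs hs
  -- linear lower bound : ∃ A, ∀ s ≥ 0, s - A ≤ g s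
  obtain ⟨N₀, hN₀⟩ := (hinf.eventually_ge_atTop 1).exists_forall_of_atTop
  set N : ℝ := max N₀ 0 with hN
  have hNnn : 0 ≤ N := le_max_right _ _
  have hgrow : ∀ s : ℝ, N ≤ s → s - N + g N ≤ g s := by
    intro s hs
    have hd2 : DifferentiableOn ℝ g (interior (Ici N)) := by
      apply hdiff.mono
      rw [interior_Ici, interior_Ici]
      exact Ioi_subset_Ioi hNnn
    have hge : ∀ t ∈ interior (Ici N), (1:ℝ) ≤ deriv g t := by
      intro t ht
      rw [interior_Ici] at ht
      rw [(hderiv t (hNnn.trans ht.le)).deriv]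
      exact hN₀ t (le_of_lt ((le_max_left N₀ 0).trans_lt ht))
    have key := (convex_Ici N).mul_sub_le_image_sub_of_le_deriv
      (hcont.mono (Ici_subset_Ici.2 hNnn)) hd2 hge N self_mem_Ici s hs hs
    linarith
  set A : ℝ := N with hA
  have hlin : ∀ s : ℝ, 0 ≤ s → s - A ≤ g s := by
    intro s hs
    rcases le_or_gt N s with h | h
    · have h1 := hgrow s h
      have h2 := hgnn N hNnn
      rw [hA]; linarith
    · have := hgnn s hs; rw [hA]; linarith
  intro ε hε
  -- choose T and x₀
  set T : ℝ := 2 / ε with hT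
  have hTpos : 0 < T := by positivity
  have hgT : 0 < g T := by
    rw [← hg0]
    exact hsm self_mem_Ici (le_of_lt hTpos) hTpos
  refine ⟨Real.log 2 / g T, by positivity, ?_⟩
  rintro x ⟨hx0, hxlt⟩ y
  -- integrability
  set h : ℝ → ℝ := fun s => Real.exp (-x * g s) with hh
  have hmeas : AEStronglyMeasurable h (volume.restrict (Ioi (0:ℝ))) := by
    apply ContinuousOn.aestronglyMeasurable _ measurableSet_Ioi
    exact (Real.continuous_exp.comp_continuousOn
      ((continuousOn_const (c := -x)).mul (hcont.mono Ioi_subset_Ici_self)))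
  have hint : IntegrableOn h (Ioi (0:ℝ)) := by
    apply Integrable.mono' ((exp_neg_integrableOn_Ioi 0 hx0).const_mul (Real.exp (x * A))) hmeas
    filter_upwards [ae_restrict_mem measurableSet_Ioi] with s hs
    rw [hh]
    simp only [Real.norm_eq_abs, abs_of_pos (Real.exp_pos _)]
    rw [← Real.exp_add]
    apply Real.exp_le_exp.2
    have := hlin s (le_of_lt hs)
    nlinarith [hx0.le, this]
  have hintnn : 0 ≤ ∫ s in Ioi (0:ℝ), h s :=
    integral_nonneg fun s => (Real.exp_pos _).le
  -- antitone comparison: h (k+1) ≤ ∫ over Ioc k (k+1)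
  have hcomp : ∀ k : ℕ, h (k + 1) ≤ ∫ s in Ioc (k : ℝ) (k + 1), h s := by
    intro k
    have hsub : Ioc (k : ℝ) (k + 1) ⊆ Ioi 0 := by
      intro t ht
      have := k.cast_nonneg (α := ℝ)
      exact lt_of_le_of_lt this ht.1
    have := setIntegral_ge_of_const_le_real (μ := volume) (f := h) (c := h (k+1))
      measurableSet_Ioc (by rw [Real.volume_Ioc]; exact ENNReal.ofReal_ne_top)
      (fun t ht => by
        rw [hh]
        apply Real.exp_le_exp.2
        have hgle : g t ≤ g (k + 1) := hmono (mem_Ici.2 (le_of_lt (hsub ht))) (mem_Ici.2 (by positivity)) ht.2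
        nlinarith [hx0.le])
      (hint.mono_set hsub)
    rw [measureReal_def, Real.volume_Ioc] at this
    simpa using this.trans_eq' (by
      rw [ENNReal.toReal_ofReal (by linarith)]
      ring)
  -- summability
  have hsummable : Summable (fun k : ℕ => h k) := by
    refine Summable.of_nonneg_of_le (fun k => (Real.exp_pos _).le) (fun k => ?_)
      ((summable_geometric_of_lt_one (Real.exp_pos _).le
        (Real.exp_lt_one_iff.2 (neg_lt_zero.2 hx0))).mul_left (Real.exp (x * A)))
    rw [hh, ← Real.exp_nat_mul, ← Real.exp_add]
    apply Real.exp_le_exp.2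
    have := hlin k (k.cast_nonneg)
    nlinarith [hx0.le]
  -- sum of integrals over Ioc pieces
  have hpd : Pairwise (Function.onFun Disjoint fun n : ℕ => Ioc (n : ℝ) (n + 1)) := by
    intro i j hij
    simp only [Function.onFun]
    rw [Set.Ioc_disjoint_Ioc]
    rcases hij.lt_or_gt with h | h
    · have hij' : (i : ℝ) + 1 ≤ j := by exact_mod_cast h
      exact le_trans (min_le_left _ _) (hij'.trans (le_max_right _ _))
    · have hij' : (j : ℝ) + 1 ≤ i := by exact_mod_cast h
      exact le_trans (min_le_right _ _) (hij'.trans (le_max_left _ _))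
  have hint' : IntegrableOn h (⋃ n : ℕ, Ioc (n : ℝ) (n + 1)) := by
    rw [iUnion_Ioc_nat]; exact hint
  have hHasSum := hasSum_integral_iUnion (fun n : ℕ => measurableSet_Ioc) hpd hint'
  rw [iUnion_Ioc_nat] at hHasSum
  -- step 2 : tsum h ≤ 1 + integral
  have step2 : (∑' k : ℕ, h k) ≤ 1 + ∫ s in Ioi (0:ℝ), h s := by
    rw [hsummable.tsum_eq_zero_add]
    have h0 : h ((0:ℕ):ℝ) = 1 := by rw [hh]; simp [hg0]
    rw [h0]
    push_cast
    gcongr 1 + ?_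
    calc (∑' k : ℕ, h (k + 1)) ≤ ∑' k : ℕ, ∫ s in Ioc (k : ℝ) (k + 1), h s :=
          Summable.tsum_le_tsum hcomp (by exact_mod_cast hsummable.comp_injective (add_left_injective 1))
          hHasSum.summable
      _ = ∫ s in Ioi (0:ℝ), h s := hHasSum.tsum_eq
  -- step 3 : 1 ≤ ε * integral
  have step3 : 1 ≤ ε * ∫ s in Ioi (0:ℝ), h s := by
    have hIocT : IntegrableOn h (Ioc 0 T) := hint.mono_set Ioc_subset_Ioi_self
    have hlow : h T * T ≤ ∫ s in Ioc (0:ℝ) T, h s := by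
      have := setIntegral_ge_of_const_le_real (μ := volume) (f := h) (c := h T)
        measurableSet_Ioc (by rw [Real.volume_Ioc]; exact ENNReal.ofReal_ne_top)
        (fun t ht => by
          rw [hh]
          apply Real.exp_le_exp.2
          have hgle : g t ≤ g T := hmono (mem_Ici.2 (le_of_lt ht.1)) hTpos.le ht.2
          nlinarith [hx0.le]) hIocT
      rw [measureReal_def, Real.volume_Ioc, ENNReal.toReal_ofReal (by linarith)] at this
      simpa using this
    have hmonoI : ∫ s in Ioc (0:ℝ) T, h s ≤ ∫ s in Ioi (0:ℝ), h s := by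
      apply setIntegral_mono_set hint
      · filter_upwards with s using (Real.exp_pos _).le
      · exact HasSubset.Subset.eventuallyLE Ioc_subset_Ioi_self
    have hhalf : (1:ℝ) / 2 ≤ h T := by
      rw [hh]
      have : -x * g T ≥ -Real.log 2 := by
        have hxgT : x * g T < Real.log 2 := (lt_div_iff₀ hgT).1 hxlt
        linarith
      calc (1:ℝ)/2 = Real.exp (-Real.log 2) := by
            rw [Real.exp_neg, Real.exp_log two_pos]
            norm_num
        _ ≤ Real.exp (-x * g T) := Real.exp_le_exp.2 this
    have : 1 / ε ≤ ∫ s in Ioi (0:ℝ), h s := by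
      have : 1 / ε = (1/2) * T := by rw [hT]; field_simp
      rw [this]
      calc (1/2 : ℝ) * T ≤ h T * T := by nlinarith
        _ ≤ ∫ s in Ioc (0:ℝ) T, h s := hlow
        _ ≤ ∫ s in Ioi (0:ℝ), h s := hmonoI
    rw [div_le_iff₀ hε] at this
    linarith [mul_comm (∫ s in Ioi (0:ℝ), h s) ε, this]
  -- step 1 : norm of complex tsum ≤ tsum h
  have hnorm : ∀ k : ℕ, ‖Complex.exp (-((x:ℂ) + (y:ℂ) * Complex.I) * (g k : ℂ))‖ = h k := by
    intro k
    rw [Complex.norm_exp, hh]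
    congr 1
    simp [Complex.add_re, Complex.mul_re]
  have step1 : ‖∑' k : ℕ, Complex.exp (-((x:ℂ) + (y:ℂ) * Complex.I) * (g k : ℂ))‖ ≤
      ∑' k : ℕ, h k := by
    calc ‖∑' k : ℕ, Complex.exp (-((x:ℂ) + (y:ℂ) * Complex.I) * (g k : ℂ))‖
        ≤ ∑' k : ℕ, ‖Complex.exp (-((x:ℂ) + (y:ℂ) * Complex.I) * (g k : ℂ))‖ :=
          norm_tsum_le_tsum_norm (by simpa only [hnorm] using hsummable)
      _ = ∑' k : ℕ, h k := by simp only [hnorm]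
  calc ‖∑' k : ℕ, Complex.exp (-((x:ℂ) + (y:ℂ) * Complex.I) * (g k : ℂ))‖
      ≤ ∑' k : ℕ, h k := step1
    _ ≤ 1 + ∫ s in Ioi (0:ℝ), h s := step2
    _ ≤ ε * (∫ s in Ioi (0:ℝ), h s) + ∫ s in Ioi (0:ℝ), h s := by linarith
    _ = (1 + ε) * ∫ s in Ioi (0:ℝ), h s := by ring
end

section
/- Let g : [0,∞) → ℝ be differentiable with g(0) = 0, g'(s) > 0 for all s ≥ 0, and g'(s) → ∞ as s → ∞, and let g⁻¹ : [0,∞) → [0,∞) denote its inverse. Then for every real x > 0, ∑_{k=1}^∞ exp(−x·g(k)) = ∫_0^∞ exp(−x·g(s)) ds − x·∫_0^∞ exp(−x·u)·{g⁻¹(u)} du, where {t} = t − ⌊t⌋ denotes the fractional part. -/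
open Filter MeasureTheory Set
open scoped ENNReal NNReal Topology

/-- For every `x > 0`,
`∑_{k=1}^∞ exp(-x·g(k)) = ∫_0^∞ exp(-x·g(s)) ds − x·∫_0^∞ exp(-x·u)·{g⁻¹(u)} du`. -/
theorem stmt1 (g g' ginv : ℝ → ℝ)
    (hg0 : g 0 = 0)
    (hderiv : ∀ s : ℝ, 0 ≤ s → HasDerivAt g (g' s) s)
    (hpos : ∀ s : ℝ, 0 ≤ s → 0 < g' s)
    (hinf : Tendsto g' atTop atTop)
    (hginv_nonneg : ∀ u : ℝ, 0 ≤ u → 0 ≤ ginv u)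
    (hginv_right : ∀ u : ℝ, 0 ≤ u → g (ginv u) = u)
    (hginv_left : ∀ s : ℝ, 0 ≤ s → ginv (g s) = s) :
    ∀ x : ℝ, 0 < x →
      ∑' k : ℕ, Real.exp (-x * g (k + 1)) =
        (∫ s in Set.Ioi (0:ℝ), Real.exp (-x * g s)) -
          x * ∫ u in Set.Ioi (0:ℝ), Real.exp (-x * u) * Int.fract (ginv u) := by
  intro x hx
  -- basic facts about g
  have hgcont : ContinuousOn g (Ici 0) := fun s hs =>
    (hderiv s hs).continuousAt.continuousWithinAt
  have hmono : StrictMonoOn g (Ici 0) := by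
    apply strictMonoOn_of_deriv_pos (convex_Ici 0) hgcont
    intro s hs
    rw [interior_Ici] at hs
    rw [(hderiv s hs.le).deriv]
    exact hpos s hs.le
  have hgnn : ∀ s : ℝ, 0 ≤ s → 0 ≤ g s := by
    intro s hs
    rcases hs.eq_or_lt with h | h
    · rw [← h, hg0]
    · rw [← hg0]
      exact (hmono self_mem_Ici (mem_Ici.mpr hs) h).le
  have hginv_mono : ∀ u v : ℝ, 0 ≤ u → u ≤ v → ginv u ≤ ginv v := by
    intro u v hu huv
    by_contra h
    push_neg at h
    have := hmono (mem_Ici.mpr (hginv_nonneg v (hu.trans huv)))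
      (mem_Ici.mpr (hginv_nonneg u hu)) h
    rw [hginv_right u hu, hginv_right v (hu.trans huv)] at this
    exact absurd huv (not_le.mpr this)
  have hlt_iff : ∀ u s : ℝ, 0 ≤ u → 0 ≤ s → (g s < u ↔ s < ginv u) := by
    intro u s hu hs
    conv_lhs => rw [← hginv_right u hu]
    exact hmono.lt_iff_lt (mem_Ici.mpr hs) (mem_Ici.mpr (hginv_nonneg u hu))
  -- linear lower bound on g
  obtain ⟨s₀, hs₀⟩ : ∃ s₀ : ℝ, ∀ s ≥ s₀, 1 ≤ g' s :=
    eventually_atTop.1 (hinf.eventually_ge_atTop 1)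
  set s₁ : ℝ := max s₀ 0 with hs₁def
  have hs₁nn : 0 ≤ s₁ := le_max_right _ _
  have hlin : ∀ s : ℝ, s₁ ≤ s → s - s₁ ≤ g s := by
    intro s hs
    have hmono2 : MonotoneOn (fun t => g t - t) (Ici s₁) := by
      apply monotoneOn_of_deriv_nonneg (convex_Ici s₁)
      · exact ContinuousOn.sub (hgcont.mono (Ici_subset_Ici.mpr hs₁nn)) continuousOn_id
      · intro t ht
        rw [interior_Ici] at ht
        exact ((hderiv t (hs₁nn.trans ht.le)).sub (hasDerivAt_id t)).differentiableAt.differentiableWithinAt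
      · intro t ht
        rw [interior_Ici] at ht
        have hd : HasDerivAt (fun t => g t - t) (g' t - 1) t :=
          (hderiv t (hs₁nn.trans ht.le)).sub (hasDerivAt_id t)
        rw [hd.deriv]
        have := hs₀ t (le_trans (le_max_left _ _) ht.le)
        linarith
    have h2 := hmono2 self_mem_Ici (mem_Ici.mpr hs) hs
    have h1 : 0 ≤ g s₁ := hgnn s₁ hs₁nn
    simp only at h2
    linarith
  have hginv_le : ∀ u : ℝ, 0 ≤ u → ginv u ≤ u + s₁ := by
    intro u hu
    rcases le_or_gt (ginv u) s₁ with h | h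
    · linarith
    · have := hlin (ginv u) h.le
      rw [hginv_right u hu] at this
      linarith
  -- measurable modifications
  set G : ℝ → ℝ := fun s => g (max s 0) with hGdef
  have hGmono : Monotone G := by
    intro a b hab
    exact hmono.monotoneOn (mem_Ici.mpr (le_max_right a 0)) (mem_Ici.mpr (le_max_right b 0))
      (max_le_max hab le_rfl)
  have hGmeas : Measurable G := hGmono.measurable
  have hGeq : ∀ s ∈ Ioi (0:ℝ), G s = g s := by
    intro s hs
    simp only [hGdef, max_eq_left (le_of_lt (mem_Ioi.mp hs))]
  have hGnn : ∀ s, 0 ≤ G s := fun s => hgnn _ (le_max_right s 0)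
  set Ginv : ℝ → ℝ := fun u => ginv (max u 0) with hGinvdef
  have hGinvmono : Monotone Ginv := fun a b hab =>
    hginv_mono _ _ (le_max_right a 0) (max_le_max hab le_rfl)
  have hGinvmeas : Measurable Ginv := hGinvmono.measurable
  have hGinvnn : ∀ u, 0 ≤ Ginv u := fun u => hginv_nonneg _ (le_max_right u 0)
  have hGinveq : ∀ u ∈ Ioi (0:ℝ), Ginv u = ginv u := by
    intro u hu
    simp only [hGinvdef, max_eq_left (le_of_lt (mem_Ioi.mp hu))]
  -- the kernel φ
  set φ : ℝ → ℝ≥0∞ := fun u => ENNReal.ofReal (x * Real.exp (-x * u)) with hφdef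
  have hφmeas : Measurable φ := by
    apply ENNReal.measurable_ofReal.comp
    exact measurable_const.mul ((measurable_id.const_mul (-x)).exp)
  -- L1 : ∫⁻_{u>c} φ = e^{-xc}
  have htop : Tendsto (fun u : ℝ => -Real.exp (-x * u)) atTop (𝓝 0) := by
    have h1 : Tendsto (fun u : ℝ => x * u) atTop atTop :=
      Tendsto.const_mul_atTop hx tendsto_id
    have h2 := Real.tendsto_exp_neg_atTop_nhds_zero.comp h1
    have h3 : Tendsto (fun u : ℝ => Real.exp (-x * u)) atTop (𝓝 0) :=
      h2.congr fun u => by simp only [Function.comp]; ring_nf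
    simpa using h3.neg
  have hL1 : ∀ c : ℝ, 0 ≤ c →
      ∫⁻ u in Ioi c, φ u = ENNReal.ofReal (Real.exp (-x * c)) := by
    intro c _
    have hint : IntegrableOn (fun u => x * Real.exp (-x * u)) (Ioi c) :=
      (exp_neg_integrableOn_Ioi c hx).const_mul x
    rw [← ofReal_integral_eq_lintegral_ofReal hint (ae_of_all _ fun u => by positivity)]
    have hd : ∀ u ∈ Ici c, HasDerivAt (fun u => -Real.exp (-x * u)) (x * Real.exp (-x * u)) u := by
      intro u _
      have h0 : HasDerivAt (fun u : ℝ => -x * u) (-x) u := by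
        simpa using (hasDerivAt_id u).const_mul (-x)
      have h2 := h0.exp.neg
      rw [show x * Real.exp (-x * u) = -(Real.exp (-x * u) * -x) by ring]
      exact h2
    have hval : ∫ u in Ioi c, x * Real.exp (-x * u) = Real.exp (-x * c) := by
      rw [integral_Ioi_of_hasDerivAt_of_tendsto' hd hint htop]
      ring
    rw [hval]
  -- the null set of "integer points"
  set N : Set ℝ := ⋃ n : ℕ, {g n} with hNdef
  have hN : volume N = 0 := measure_iUnion_null fun n => measure_singleton _
  -- counting identity
  have hcount : ∀ u : ℝ, 0 < u → u ∉ N →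
      ∑' k : ℕ, (Ioi (g ((k:ℝ) + 1))).indicator (fun _ => (1:ℝ≥0∞)) u = (⌊Ginv u⌋₊ : ℝ≥0∞) := by
    intro u hu huN
    have htG : Ginv u = ginv u := hGinveq u hu
    have htnn : 0 ≤ ginv u := hginv_nonneg u hu.le
    have htnotnat : ∀ n : ℕ, ginv u ≠ (n:ℝ) := by
      intro n hn
      apply huN
      refine mem_iUnion.mpr ⟨n, ?_⟩
      rw [mem_singleton_iff, ← hginv_right u hu.le, hn]
    have hfloor_lt : (⌊ginv u⌋₊ : ℝ) < ginv u :=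
      lt_of_le_of_ne (Nat.floor_le htnn) fun hh => htnotnat _ hh.symm
    have hiff : ∀ k : ℕ, (g ((k:ℝ) + 1) < u ↔ k < ⌊ginv u⌋₊) := by
      intro k
      rw [hlt_iff u ((k:ℝ) + 1) hu.le (by positivity)]
      constructor
      · intro h
        have h1 : ((k + 1 : ℕ) : ℝ) ≤ ginv u := by push_cast; linarith
        have := Nat.le_floor h1
        omega
      · intro h
        have h2 : (k + 1 : ℕ) ≤ ⌊ginv u⌋₊ := h
        have h3 : ((k + 1 : ℕ) : ℝ) ≤ (⌊ginv u⌋₊ : ℝ) := by exact_mod_cast h2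
        push_cast at h3
        linarith
    rw [htG]
    calc ∑' k : ℕ, (Ioi (g ((k:ℝ) + 1))).indicator (fun _ => (1:ℝ≥0∞)) u
        = ∑' k : ℕ, if k < ⌊ginv u⌋₊ then (1:ℝ≥0∞) else 0 := by
          apply tsum_congr
          intro k
          by_cases h : k < ⌊ginv u⌋₊
          · rw [if_pos h, indicator_of_mem (mem_Ioi.mpr ((hiff k).mpr h))]
          · rw [if_neg h, indicator_of_notMem]
            intro hmem
            exact h ((hiff k).mp (mem_Ioi.mp hmem))
      _ = (⌊ginv u⌋₊ : ℝ≥0∞) := by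
          rw [tsum_eq_sum (s := Finset.range ⌊ginv u⌋₊) (fun k hk => if_neg (by simpa using hk))]
          rw [Finset.sum_congr rfl (fun k hk => if_pos (Finset.mem_range.mp hk))]
          simp
  -- the sum identity
  have hterm_nn : ∀ k : ℕ, (0:ℝ) ≤ g ((k:ℝ) + 1) := fun k => hgnn _ (by positivity)
  have hS : ∑' k : ℕ, ENNReal.ofReal (Real.exp (-x * g ((k:ℝ) + 1)))
      = ∫⁻ u in Ioi (0:ℝ), φ u * (⌊Ginv u⌋₊ : ℝ≥0∞) := by
    have h1 : ∀ k : ℕ, ∫⁻ u in Ioi (0:ℝ), (Ioi (g ((k:ℝ) + 1))).indicator φ u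
        = ENNReal.ofReal (Real.exp (-x * g ((k:ℝ) + 1))) := by
      intro k
      rw [lintegral_indicator measurableSet_Ioi,
        Measure.restrict_restrict measurableSet_Ioi,
        inter_eq_self_of_subset_left (Ioi_subset_Ioi (hterm_nn k))]
      exact hL1 _ (hterm_nn k)
    calc ∑' k : ℕ, ENNReal.ofReal (Real.exp (-x * g ((k:ℝ) + 1)))
        = ∑' k : ℕ, ∫⁻ u in Ioi (0:ℝ), (Ioi (g ((k:ℝ) + 1))).indicator φ u :=
          (tsum_congr fun k => (h1 k)).symm
      _ = ∫⁻ u in Ioi (0:ℝ), ∑' k : ℕ, (Ioi (g ((k:ℝ) + 1))).indicator φ u :=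
          (lintegral_tsum fun k => (hφmeas.indicator measurableSet_Ioi).aemeasurable).symm
      _ = ∫⁻ u in Ioi (0:ℝ), φ u * (⌊Ginv u⌋₊ : ℝ≥0∞) := by
          apply lintegral_congr_ae
          have hNae : ∀ᵐ u ∂(volume.restrict (Ioi (0:ℝ))), u ∉ N :=
            ae_restrict_of_ae (measure_eq_zero_iff_ae_notMem.mp hN)
          filter_upwards [hNae, ae_restrict_mem measurableSet_Ioi] with u huN hu
          rw [← hcount u hu huN, ← ENNReal.tsum_mul_left]
          apply tsum_congr
          intro k
          by_cases h : u ∈ Ioi (g ((k:ℝ) + 1)) <;> simp [h]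
  -- the integral identity
  have hA : ∫⁻ s in Ioi (0:ℝ), ENNReal.ofReal (Real.exp (-x * g s))
      = ∫⁻ u in Ioi (0:ℝ), φ u * ENNReal.ofReal (Ginv u) := by
    have hGg : ∫⁻ s in Ioi (0:ℝ), ENNReal.ofReal (Real.exp (-x * g s))
        = ∫⁻ s in Ioi (0:ℝ), ENNReal.ofReal (Real.exp (-x * G s)) :=
      setLIntegral_congr_fun measurableSet_Ioi
        (fun s hs => by rw [hGeq s hs])
    rw [hGg]
    have key : ∀ s ∈ Ioi (0:ℝ), ENNReal.ofReal (Real.exp (-x * G s))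
        = ∫⁻ u in Ioi (0:ℝ), φ u * (Ioi (G s)).indicator (fun _ => (1:ℝ≥0∞)) u := by
      intro s _
      have hGs : 0 ≤ G s := hGnn s
      have h2 : ∫⁻ u in Ioi (0:ℝ), φ u * (Ioi (G s)).indicator (fun _ => (1:ℝ≥0∞)) u
          = ∫⁻ u in Ioi (0:ℝ), (Ioi (G s)).indicator φ u :=
        lintegral_congr fun u => by by_cases h : u ∈ Ioi (G s) <;> simp [h]
      rw [h2, lintegral_indicator measurableSet_Ioi,
        Measure.restrict_restrict measurableSet_Ioi,
        inter_eq_self_of_subset_left (Ioi_subset_Ioi hGs)]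
      exact (hL1 _ hGs).symm
    have hswapmeas : Measurable (Function.uncurry fun s u =>
        φ u * (Ioi (G s)).indicator (fun _ => (1:ℝ≥0∞)) u) := by
      have hset : MeasurableSet {p : ℝ × ℝ | G p.1 < p.2} :=
        measurableSet_lt (hGmeas.comp measurable_fst) measurable_snd
      have heq : (Function.uncurry fun s u =>
          φ u * (Ioi (G s)).indicator (fun _ => (1:ℝ≥0∞)) u)
          = fun p : ℝ × ℝ => φ p.2 * {q : ℝ × ℝ | G q.1 < q.2}.indicator (fun _ => (1:ℝ≥0∞)) p := by
        funext p
        rcases p with ⟨s, u⟩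
        simp [Function.uncurry, Set.indicator_apply, mem_Ioi, Set.mem_setOf_eq]
      rw [heq]
      exact (hφmeas.comp measurable_snd).mul (measurable_const.indicator hset)
    calc ∫⁻ s in Ioi (0:ℝ), ENNReal.ofReal (Real.exp (-x * G s))
        = ∫⁻ s in Ioi (0:ℝ), ∫⁻ u in Ioi (0:ℝ),
            φ u * (Ioi (G s)).indicator (fun _ => (1:ℝ≥0∞)) u :=
          setLIntegral_congr_fun measurableSet_Ioi key
      _ = ∫⁻ u in Ioi (0:ℝ), ∫⁻ s in Ioi (0:ℝ),
            φ u * (Ioi (G s)).indicator (fun _ => (1:ℝ≥0∞)) u :=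
          lintegral_lintegral_swap hswapmeas.aemeasurable
      _ = ∫⁻ u in Ioi (0:ℝ), φ u * ENNReal.ofReal (Ginv u) := by
          apply setLIntegral_congr_fun measurableSet_Ioi
          intro u hu
          have hind : ∀ s : ℝ, (Ioi (G s)).indicator (fun _ => (1:ℝ≥0∞)) u
              = ({s : ℝ | G s < u}).indicator (fun _ => (1:ℝ≥0∞)) s := by
            intro s
            simp only [Set.indicator_apply, mem_Ioi, mem_setOf_eq]
          have hsmeas : MeasurableSet {s : ℝ | G s < u} :=
            measurableSet_lt hGmeas measurable_const
          calc ∫⁻ s in Ioi (0:ℝ), φ u * (Ioi (G s)).indicator (fun _ => (1:ℝ≥0∞)) u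
              = ∫⁻ s in Ioi (0:ℝ), φ u * ({s : ℝ | G s < u}).indicator (fun _ => (1:ℝ≥0∞)) s :=
                lintegral_congr fun s => by rw [hind s]
            _ = φ u * ∫⁻ s in Ioi (0:ℝ), ({s : ℝ | G s < u}).indicator (fun _ => (1:ℝ≥0∞)) s :=
                lintegral_const_mul _ (measurable_const.indicator hsmeas)
            _ = φ u * ENNReal.ofReal (Ginv u) := by
                congr 1
                rw [lintegral_indicator hsmeas, setLIntegral_one, Measure.restrict_apply hsmeas]
                have hseteq : {s : ℝ | G s < u} ∩ Ioi 0 = Ioo 0 (ginv u) := by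
                  ext s
                  simp only [mem_inter_iff, mem_setOf_eq, mem_Ioi, mem_Ioo]
                  constructor
                  · rintro ⟨h1, h2⟩
                    refine ⟨h2, ?_⟩
                    rw [hGeq s h2] at h1
                    exact (hlt_iff u s (le_of_lt hu) h2.le).mp h1
                  · rintro ⟨h1, h2⟩
                    refine ⟨?_, h1⟩
                    rw [hGeq s h1]
                    exact (hlt_iff u s (le_of_lt hu) h1.le).mpr h2
                rw [hseteq, Real.volume_Ioo, hGinveq u hu, sub_zero]
  -- floor + fract split
  have hsplit : ∀ u : ℝ, ENNReal.ofReal (Ginv u)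
      = (⌊Ginv u⌋₊ : ℝ≥0∞) + ENNReal.ofReal (Int.fract (Ginv u)) := by
    intro u
    have h1 : (⌊Ginv u⌋₊ : ℝ) + Int.fract (Ginv u) = Ginv u := by
      rw [natCast_floor_eq_intCast_floor (hGinvnn u)]
      exact Int.floor_add_fract _
    have h2 : ENNReal.ofReal (Ginv u) = ENNReal.ofReal ((⌊Ginv u⌋₊ : ℝ) + Int.fract (Ginv u)) := by
      rw [h1]
    rw [h2, ENNReal.ofReal_add (by positivity) (Int.fract_nonneg _), ENNReal.ofReal_natCast]
  -- integrability of the fract integrand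
  have hfract_meas : Measurable fun u => x * Real.exp (-x * u) * Int.fract (Ginv u) :=
    (measurable_const.mul ((measurable_id.const_mul (-x)).exp)).mul hGinvmeas.fract
  have hFint : IntegrableOn (fun u => x * Real.exp (-x * u) * Int.fract (Ginv u)) (Ioi (0:ℝ)) := by
    apply Integrable.mono' ((exp_neg_integrableOn_Ioi 0 hx).const_mul x)
      hfract_meas.aestronglyMeasurable
    apply ae_of_all _
    intro u
    rw [Real.norm_eq_abs, abs_of_nonneg (mul_nonneg (by positivity) (Int.fract_nonneg _))]
    have h1 : Int.fract (Ginv u) ≤ 1 := (Int.fract_lt_one _).le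
    have h2 : 0 ≤ x * Real.exp (-x * u) := by positivity
    nlinarith
  have hF : ENNReal.ofReal (∫ u in Ioi (0:ℝ), x * Real.exp (-x * u) * Int.fract (Ginv u))
      = ∫⁻ u in Ioi (0:ℝ), φ u * ENNReal.ofReal (Int.fract (Ginv u)) := by
    rw [ofReal_integral_eq_lintegral_ofReal hFint
      (ae_of_all _ fun u => mul_nonneg (by positivity) (Int.fract_nonneg _))]
    apply lintegral_congr fun u => ?_
    rw [← ENNReal.ofReal_mul (by positivity)]
  -- integrability of exp(-x g s)
  have hAint : IntegrableOn (fun s => Real.exp (-x * g s)) (Ioi (0:ℝ)) := by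
    have h1 : IntegrableOn (fun s => Real.exp (-x * G s)) (Ioi (0:ℝ)) := by
      apply Integrable.mono'
        (((exp_neg_integrableOn_Ioi 0 hx).const_mul (Real.exp (x * s₁))))
        ((hGmeas.const_mul (-x)).exp.aestronglyMeasurable)
      filter_upwards [ae_restrict_mem measurableSet_Ioi] with s hs
      rw [Real.norm_eq_abs, abs_of_nonneg (Real.exp_pos _).le, ← Real.exp_add]
      apply Real.exp_le_exp.mpr
      have hG : G s = g s := hGeq s hs
      have h2 : s - s₁ ≤ g s := by
        rcases le_or_gt s s₁ with h | h
        · have := hgnn s (le_of_lt hs); linarith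
        · exact hlin s h.le
      rw [hG]
      nlinarith
    exact h1.congr_fun (fun s hs => by dsimp only; rw [hGeq s hs]) measurableSet_Ioi
  have hAofReal : ∫⁻ s in Ioi (0:ℝ), ENNReal.ofReal (Real.exp (-x * g s))
      = ENNReal.ofReal (∫ s in Ioi (0:ℝ), Real.exp (-x * g s)) :=
    (ofReal_integral_eq_lintegral_ofReal hAint (ae_of_all _ fun s => (Real.exp_pos _).le)).symm
  -- main ENNReal identity
  have hmain : ENNReal.ofReal (∫ s in Ioi (0:ℝ), Real.exp (-x * g s))
      = (∑' k : ℕ, ENNReal.ofReal (Real.exp (-x * g ((k:ℝ) + 1))))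
        + ENNReal.ofReal (∫ u in Ioi (0:ℝ), x * Real.exp (-x * u) * Int.fract (Ginv u)) := by
    rw [← hAofReal, hA, hS, hF]
    have hmeas1 : Measurable fun u => φ u * (⌊Ginv u⌋₊ : ℝ≥0∞) :=
      hφmeas.mul (measurable_from_top.comp hGinvmeas.nat_floor)
    rw [← lintegral_add_left hmeas1]
    apply lintegral_congr fun u => ?_
    rw [hsplit u, mul_add]
  -- summability and conversion back to ℝ
  have hle : (∑' k : ℕ, ENNReal.ofReal (Real.exp (-x * g ((k:ℝ) + 1))))
      ≤ ENNReal.ofReal (∫ s in Ioi (0:ℝ), Real.exp (-x * g s)) := by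
    rw [hmain]; exact le_self_add
  have hne : (∑' k : ℕ, ENNReal.ofReal (Real.exp (-x * g ((k:ℝ) + 1)))) ≠ ⊤ :=
    ne_top_of_le_ne_top ENNReal.ofReal_ne_top hle
  have hsummable : Summable fun k : ℕ => Real.exp (-x * g ((k:ℝ) + 1)) := by
    have h2 := ENNReal.summable_toReal hne
    exact h2.congr fun k => ENNReal.toReal_ofReal (Real.exp_pos _).le
  have htsum : (∑' k : ℕ, ENNReal.ofReal (Real.exp (-x * g ((k:ℝ) + 1))))
      = ENNReal.ofReal (∑' k : ℕ, Real.exp (-x * g ((k:ℝ) + 1))) :=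
    (ENNReal.ofReal_tsum_of_nonneg (fun k => (Real.exp_pos _).le) hsummable).symm
  rw [htsum] at hmain
  have hSrnn : 0 ≤ ∑' k : ℕ, Real.exp (-x * g ((k:ℝ) + 1)) :=
    tsum_nonneg fun k => (Real.exp_pos _).le
  have hFxnn : 0 ≤ ∫ u in Ioi (0:ℝ), x * Real.exp (-x * u) * Int.fract (Ginv u) :=
    setIntegral_nonneg measurableSet_Ioi fun u _ =>
      mul_nonneg (by positivity) (Int.fract_nonneg _)
  rw [← ENNReal.ofReal_add hSrnn hFxnn] at hmain
  have hreal : (∫ s in Ioi (0:ℝ), Real.exp (-x * g s))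
      = (∑' k : ℕ, Real.exp (-x * g ((k:ℝ) + 1)))
        + ∫ u in Ioi (0:ℝ), x * Real.exp (-x * u) * Int.fract (Ginv u) := by
    have hAnn : 0 ≤ ∫ s in Ioi (0:ℝ), Real.exp (-x * g s) :=
      setIntegral_nonneg measurableSet_Ioi fun s _ => (Real.exp_pos _).le
    exact (ENNReal.ofReal_eq_ofReal_iff hAnn (by positivity)).mp hmain
  have hFx_eq : (∫ u in Ioi (0:ℝ), x * Real.exp (-x * u) * Int.fract (Ginv u))
      = x * ∫ u in Ioi (0:ℝ), Real.exp (-x * u) * Int.fract (ginv u) := by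
    rw [← integral_const_mul]
    apply setIntegral_congr_fun measurableSet_Ioi
    intro u hu
    show x * Real.exp (-x * u) * Int.fract (Ginv u) = x * (Real.exp (-x * u) * Int.fract (ginv u))
    rw [hGinveq u hu]
    ring
  rw [hFx_eq] at hreal
  linarith
end

section
/- Let g : [0,∞) → ℝ be differentiable with g' > 0 and g'(s) → ∞ as s → ∞. Fix y ∈ ℝ. Let ρ : [0,∞) → (0,∞) be twice continuously differentiable with ρ' > 0, ρ'' ≤ 0, and ρ'' bounded, and suppose the exponential sums S_N = ∑_{j=1}^N exp(−i·y·g(j)) satisfy sup_N |S_N|/ρ(N) < ∞. Define Φ(x) = ∫_0^∞ exp(−x·g(u))·ρ'(u) du and assume Φ(x) → ∞ as x → 0⁺. Then there exist C > 0 and x₀ > 0 such that |∑_{k=1}^∞ exp(−(x+iy)·g(k))| ≤ C·Φ(x) for all x ∈ (0, x₀). -/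
open Filter MeasureTheory Set

private lemma abel_id (v : ℕ → ℝ) (a : ℕ → ℂ) (n : ℕ) :
    ∑ k ∈ Finset.range n, (v k : ℂ) * a k
      = ∑ k ∈ Finset.range n, ((v k - v (k+1) : ℝ) : ℂ) * (∑ j ∈ Finset.range (k+1), a j)
        + (v n : ℂ) * ∑ j ∈ Finset.range n, a j := by
  induction n with
  | zero => simp
  | succ n ih =>
    rw [Finset.sum_range_succ (fun k => (v k : ℂ) * a k), ih, Finset.sum_range_succ
      (fun k => ((v k - v (k+1) : ℝ) : ℂ) * (∑ j ∈ Finset.range (k+1), a j)),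
      Finset.sum_range_succ a]
    push_cast
    ring

private lemma abel_id2 (v r : ℕ → ℝ) (n : ℕ) :
    ∑ k ∈ Finset.range n, (v k - v (k+1)) * r (k+1) + v n * r n
      = v 0 * r 0 + ∑ k ∈ Finset.range n, v k * (r (k+1) - r k) := by
  induction n with
  | zero => simp
  | succ n ih =>
    rw [Finset.sum_range_succ, Finset.sum_range_succ]
    linarith [ih]

private lemma mono_aux (g g' : ℝ → ℝ) (t c : ℝ)
    (hd : ∀ s, t ≤ s → HasDerivAt g (g' s) s)
    (hge : ∀ s, t ≤ s → c ≤ g' s) :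
    MonotoneOn (fun u => g u - c * u) (Ici t) := by
  have hD : ∀ s, t ≤ s → HasDerivAt (fun u => g u - c * u) (g' s - c) s := by
    intro s hs
    exact ((hd s hs).sub ((hasDerivAt_id' s).const_mul c)).congr_deriv (by ring)
  apply monotoneOn_of_deriv_nonneg (convex_Ici t)
  · intro s hs
    exact (hD s hs).continuousAt.continuousWithinAt
  · intro s hs
    rw [interior_Ici] at hs
    exact (hD s hs.le).differentiableAt.differentiableWithinAt
  · intro s hs
    rw [interior_Ici] at hs
    rw [(hD s hs.le).deriv]
    have := hge s hs.le
    linarith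

/-- Theorem 3(ii) (pointwise upper bound along the barrier): if the exponential sums satisfy
`sup_N |S_N|/ρ(N) < ∞`, then `f(x+iy) = O(Φ(x))` as `x → 0⁺`. -/
theorem stmt5 (g g' : ℝ → ℝ)
    (hderiv : ∀ s : ℝ, 0 ≤ s → HasDerivAt g (g' s) s)
    (hpos : ∀ s : ℝ, 0 ≤ s → 0 < g' s)
    (hinf : Tendsto g' atTop atTop)
    (y : ℝ)
    (ρ : ℝ → ℝ)
    (hρC2 : ContDiff ℝ 2 ρ)
    (hρpos : ∀ s : ℝ, 0 ≤ s → 0 < ρ s)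
    (hρ'pos : ∀ s : ℝ, 0 ≤ s → 0 < deriv ρ s)
    (hρ''nonpos : ∀ s : ℝ, 0 ≤ s → deriv (deriv ρ) s ≤ 0)
    (hρ''bdd : ∃ M : ℝ, ∀ s : ℝ, 0 ≤ s → |deriv (deriv ρ) s| ≤ M)
    (hS : ∃ M : ℝ, ∀ N : ℕ,
        ‖∑ j ∈ Finset.Icc 1 N, Complex.exp (-(Complex.I * (y:ℂ)) * (g j : ℂ))‖ / ρ N ≤ M)
    (Φ : ℝ → ℝ)
    (hΦ : ∀ x : ℝ, Φ x = ∫ u in Set.Ioi (0:ℝ), Real.exp (-x * g u) * deriv ρ u)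
    (hΦinf : Tendsto Φ (nhdsWithin 0 (Set.Ioi 0)) atTop) :
    ∃ C : ℝ, 0 < C ∧ ∃ x₀ : ℝ, 0 < x₀ ∧ ∀ x ∈ Set.Ioo (0:ℝ) x₀,
      ‖∑' k : ℕ, Complex.exp (-((x:ℂ) + (y:ℂ) * Complex.I) * (g (k + 1) : ℂ))‖ ≤ C * Φ x := by
  obtain ⟨M, hM⟩ := hS
  set M' : ℝ := max M 1 with hM'def
  have hM'pos : 0 < M' := lt_of_lt_of_le one_pos (le_max_right _ _)
  -- basic continuity / differentiability facts
  have hρdiff : ∀ t : ℝ, HasDerivAt ρ (deriv ρ t) t := fun t =>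
    ((hρC2.differentiable (by norm_num)) t).hasDerivAt
  have hρ'C1 : ContDiff ℝ 1 (deriv ρ) := by
    have h2 : ContDiff ℝ ((1 : ℕ) + 1) ρ := by exact_mod_cast hρC2
    exact (contDiff_succ_iff_deriv.mp h2).2.2
  have hρ'cont : Continuous (deriv ρ) := hρ'C1.continuous
  have hgcont : ContinuousOn g (Ici 0) := fun s hs =>
    (hderiv s hs).continuousAt.continuousWithinAt
  -- monotonicity of g on [0, ∞)
  have hgmono : MonotoneOn g (Ici 0) := by
    have := mono_aux g g' 0 0 (fun s hs => hderiv s hs) (fun s hs => (hpos s hs).le)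
    simpa using this
  -- growth of g beyond s₁
  obtain ⟨s₀, hs₀⟩ : ∃ s₀ : ℝ, ∀ s, s₀ ≤ s → 1 ≤ g' s :=
    eventually_atTop.mp (hinf.eventually_ge_atTop 1)
  set s₁ : ℝ := max s₀ 0 with hs₁def
  have hs₁nonneg : 0 ≤ s₁ := le_max_right _ _
  have hgrow : ∀ u, s₁ ≤ u → g s₁ + (u - s₁) ≤ g u := by
    have hm := mono_aux g g' s₁ 1
      (fun s hs => hderiv s (le_trans hs₁nonneg hs))
      (fun s hs => hs₀ s (le_trans (le_max_left _ _) hs))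
    intro u hu
    have := hm (self_mem_Ici) (mem_Ici.mpr hu) hu
    simp only [one_mul] at this
    linarith
  -- bound on the exponential sums
  have hA : ∀ N : ℕ,
      ‖∑ j ∈ Finset.Icc 1 N, Complex.exp (-(Complex.I * (y:ℂ)) * (g j : ℂ))‖ ≤ M' * ρ N := by
    intro N
    have hρN : 0 < ρ N := hρpos _ (Nat.cast_nonneg N)
    have := (div_le_iff₀ hρN).mp (hM N)
    calc ‖_‖ ≤ M * ρ N := this
      _ ≤ M' * ρ N := by
          apply mul_le_mul_of_nonneg_right (le_max_left _ _) hρN.le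
  -- choice of x₀
  set K : ℝ := Real.exp |g 1| * ρ 0 with hKdef
  have hev : ∀ᶠ x in nhdsWithin 0 (Ioi 0), K ≤ Φ x := hΦinf.eventually_ge_atTop K
  rw [eventually_nhdsWithin_iff, Metric.eventually_nhds_iff] at hev
  obtain ⟨ε, hε, hball⟩ := hev
  refine ⟨2 * M', by positivity, min ε 1, lt_min hε one_pos, ?_⟩
  intro x hx
  obtain ⟨hx0, hxlt⟩ := hx
  have hx1 : x ≤ 1 := le_of_lt (lt_of_lt_of_le hxlt (min_le_right _ _))
  have hΦK : K ≤ Φ x := by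
    apply hball _ (mem_Ioi.mpr hx0)
    rw [Real.dist_eq, sub_zero, abs_of_pos hx0]
    exact lt_of_lt_of_le hxlt (min_le_left _ _)
  -- notation
  set v : ℕ → ℝ := fun k => Real.exp (-x * g ((k : ℝ) + 1)) with hvdef
  set c : ℕ → ℂ := fun j => Complex.exp (-(Complex.I * (y:ℂ)) * (g j : ℂ)) with hcdef
  set h : ℝ → ℝ := fun u => Real.exp (-x * g u) * deriv ρ u with hhdef
  set F : ℕ → ℂ := fun k => Complex.exp (-((x:ℂ) + (y:ℂ) * Complex.I) * (g ((k : ℝ) + 1) : ℂ))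
    with hFdef
  have hvpos : ∀ k, 0 < v k := fun k => Real.exp_pos _
  have hvanti : ∀ k : ℕ, v (k + 1) ≤ v k := by
    intro k
    apply Real.exp_le_exp.mpr
    have : g ((k : ℝ) + 1) ≤ g ((k : ℝ) + 1 + 1) := by
      apply hgmono (mem_Ici.mpr (by positivity)) (mem_Ici.mpr (by positivity)) (by linarith)
    push_cast
    nlinarith [this]
  have hnormF : ∀ k : ℕ, ‖F k‖ = v k := by
    intro k
    rw [hFdef]
    simp only [Complex.norm_exp]
    congr 1
    simp [Complex.add_re, Complex.mul_re]
  have hFsplit : ∀ k : ℕ, F k = (v k : ℂ) * c (k + 1) := by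
    intro k
    have hcast : ((k + 1 : ℕ) : ℝ) = (k : ℝ) + 1 := by push_cast; ring
    rw [hFdef, hcdef]
    simp only [hcast]
    rw [show -((x:ℂ) + (y:ℂ) * Complex.I) * ((g ((k:ℝ) + 1) : ℝ) : ℂ)
        = ((-(x * g ((k:ℝ) + 1)) : ℝ) : ℂ) + -(Complex.I * (y:ℂ)) * ((g ((k:ℝ) + 1) : ℝ) : ℂ) by
      push_cast; ring]
    rw [Complex.exp_add, ← Complex.ofReal_exp, hvdef]
    norm_num
  -- continuity and integrability of h
  have hhcont : ContinuousOn h (Ici 0) := by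
    apply ContinuousOn.mul _ hρ'cont.continuousOn
    exact Real.continuous_exp.comp_continuousOn ((hgcont.const_smul (-x)))
  have hρ'anti : AntitoneOn (deriv ρ) (Ici 0) := by
    apply antitoneOn_of_deriv_nonpos (convex_Ici 0) hρ'cont.continuousOn
    · exact fun s hs => ((hρ'C1.differentiable one_ne_zero) s).differentiableWithinAt
    · intro s hs
      rw [interior_Ici] at hs
      exact hρ''nonpos s hs.le
  have hint : IntegrableOn h (Ioi 0) := by
    rw [← Ioc_union_Ioi_eq_Ioi hs₁nonneg]
    apply IntegrableOn.union
    · exact ((hhcont.mono (Icc_subset_Ici_self)).integrableOn_Icc).mono_set Ioc_subset_Icc_self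
    · apply Integrable.mono'
        (g := fun u => (Real.exp (-x * g s₁ + x * s₁) * deriv ρ 0) * Real.exp (-x * u))
      · exact ((exp_neg_integrableOn_Ioi s₁ hx0).const_mul _)
      · exact (hhcont.mono (fun u hu => le_trans hs₁nonneg (le_of_lt hu))).aestronglyMeasurable
          measurableSet_Ioi
      · apply (ae_restrict_iff' measurableSet_Ioi).mpr
        apply Filter.Eventually.of_forall
        intro u hu
        have hu1 : s₁ ≤ u := (mem_Ioi.mp hu).le
        have hu0 : 0 ≤ u := le_trans hs₁nonneg hu1
        have hρ'0 : deriv ρ u ≤ deriv ρ 0 := hρ'anti self_mem_Ici hu0 hu0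
        have hgu : g s₁ + (u - s₁) ≤ g u := hgrow u hu1
        have hexp : Real.exp (-x * g u) ≤ Real.exp (-x * g s₁ + x * s₁) * Real.exp (-x * u) := by
          rw [← Real.exp_add]
          apply Real.exp_le_exp.mpr
          nlinarith [hx0]
        have hpos' : (0:ℝ) ≤ deriv ρ u := (hρ'pos u hu0).le
        show ‖Real.exp (-x * g u) * deriv ρ u‖ ≤ _
        rw [Real.norm_eq_abs, abs_of_nonneg (by positivity)]
        calc Real.exp (-x * g u) * deriv ρ u
            ≤ (Real.exp (-x * g s₁ + x * s₁) * Real.exp (-x * u)) * deriv ρ u :=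
              mul_le_mul_of_nonneg_right hexp hpos'
          _ ≤ (Real.exp (-x * g s₁ + x * s₁) * Real.exp (-x * u)) * deriv ρ 0 := by
              apply mul_le_mul_of_nonneg_left hρ'0 (by positivity)
          _ = Real.exp (-x * g s₁ + x * s₁) * deriv ρ 0 * Real.exp (-x * u) := by ring
  have hhnonneg : ∀ u : ℝ, 0 ≤ u → 0 ≤ h u := by
    intro u hu
    rw [hhdef]
    exact mul_nonneg (Real.exp_nonneg _) (hρ'pos u hu).le
  -- summability
  set n₁ : ℕ := ⌈s₁⌉₊ with hn₁def
  have hn₁ : s₁ ≤ (n₁ : ℝ) := Nat.le_ceil _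
  have hsumF : Summable F := by
    rw [← summable_nat_add_iff n₁]
    apply Summable.of_norm_bounded
      (g := fun k : ℕ => Real.exp (-x * g s₁) * Real.exp (-x) ^ k)
    · exact (summable_geometric_of_lt_one (Real.exp_nonneg _)
        (Real.exp_lt_one_iff.mpr (by linarith))).mul_left _
    · intro k
      rw [hnormF]
      have harg : s₁ ≤ (↑(k + n₁) : ℝ) + 1 := by
        push_cast
        have : (0:ℝ) ≤ (k:ℝ) := Nat.cast_nonneg _
        linarith
      have hgrow' := hgrow _ harg
      have : g s₁ + (k : ℝ) ≤ g ((↑(k + n₁) : ℝ) + 1) := by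
        push_cast at hgrow' ⊢
        linarith
      rw [hvdef]
      calc Real.exp (-x * (g ((↑(k + n₁) : ℝ) + 1)))
          ≤ Real.exp (-x * (g s₁ + k)) := by
            apply Real.exp_le_exp.mpr
            nlinarith [hx0]
        _ = Real.exp (-x * g s₁) * Real.exp (-x) ^ k := by
            rw [← Real.exp_nat_mul, ← Real.exp_add]
            ring_nf
  -- the uniform bound on partial sums
  have hpartial : ∀ N : ℕ, ‖∑ k ∈ Finset.range N, F k‖ ≤ 2 * M' * Φ x := by
    intro N
    -- rewrite in Abel form
    have hIcc : ∀ m : ℕ, ∑ j ∈ Finset.Icc 1 m, c j = ∑ k ∈ Finset.range m, c (k + 1) := by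
      intro m
      rw [← Finset.Ico_add_one_right_eq_Icc, Finset.sum_Ico_eq_sum_range]
      simp [add_comm]
    have hsum1 : ∑ k ∈ Finset.range N, F k
        = ∑ k ∈ Finset.range N, ((v k - v (k+1) : ℝ) : ℂ) * (∑ j ∈ Finset.Icc 1 (k+1), c j)
          + (v N : ℂ) * ∑ j ∈ Finset.Icc 1 N, c j := by
      rw [hIcc N]
      simp only [hIcc]
      rw [← abel_id v (fun k => c (k + 1)) N]
      exact Finset.sum_congr rfl fun k _ => hFsplit k
    rw [hsum1]
    have hnorm1 : ‖∑ k ∈ Finset.range N, ((v k - v (k+1) : ℝ) : ℂ) *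
          (∑ j ∈ Finset.Icc 1 (k+1), c j) + (v N : ℂ) * ∑ j ∈ Finset.Icc 1 N, c j‖
        ≤ ∑ k ∈ Finset.range N, (v k - v (k+1)) * (M' * ρ ((k:ℝ)+1)) + v N * (M' * ρ N) := by
      apply le_trans (norm_add_le _ _)
      apply add_le_add
      · apply le_trans (norm_sum_le _ _)
        apply Finset.sum_le_sum
        intro k _
        rw [norm_mul, Complex.norm_real, Real.norm_eq_abs, abs_of_nonneg (by linarith [hvanti k])]
        apply mul_le_mul_of_nonneg_left _ (by linarith [hvanti k])
        have := hA (k+1)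
        push_cast at this ⊢
        exact this
      · rw [norm_mul, Complex.norm_real, Real.norm_eq_abs, abs_of_nonneg (hvpos N).le]
        exact mul_le_mul_of_nonneg_left (hA N) (hvpos N).le
    apply le_trans hnorm1
    -- second Abel rearrangement
    have hrearr : ∑ k ∈ Finset.range N, (v k - v (k+1)) * (M' * ρ ((k:ℝ)+1)) + v N * (M' * ρ N)
        = M' * (∑ k ∈ Finset.range N, (v k - v (k+1)) * ρ (((k:ℕ):ℝ)+1) + v N * ρ (N:ℝ)) := by
      rw [mul_add, Finset.mul_sum]
      congr 1
      · exact Finset.sum_congr rfl fun k _ => by ring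
      · ring
    rw [hrearr]
    have habel2 := abel_id2 v (fun k => ρ (k : ℝ)) N
    simp only [Nat.cast_add, Nat.cast_one, Nat.cast_zero] at habel2
    rw [habel2]
    -- bound the telescoped sum by the integral
    have hterm : ∀ k : ℕ, v k * (ρ ((k:ℝ) + 1) - ρ (k:ℝ)) ≤ ∫ u in (k:ℝ)..((k:ℝ)+1), h u := by
      intro k
      have hk0 : (0:ℝ) ≤ (k:ℝ) := Nat.cast_nonneg _
      have hFTC : ∫ u in (k:ℝ)..((k:ℝ)+1), deriv ρ u = ρ ((k:ℝ)+1) - ρ (k:ℝ) := by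
        apply intervalIntegral.integral_deriv_eq_sub
        · exact fun u _ => (hρC2.differentiable (by norm_num)) u
        · exact hρ'cont.intervalIntegrable _ _
      rw [← hFTC, ← intervalIntegral.integral_const_mul]
      apply intervalIntegral.integral_mono_on (by linarith)
      · exact (hρ'cont.intervalIntegrable _ _).const_mul _
      · apply ContinuousOn.intervalIntegrable
        apply hhcont.mono
        rw [uIcc_of_le (by linarith)]
        intro u hu
        exact le_trans hk0 hu.1
      · intro u hu
        rw [hhdef]
        apply mul_le_mul_of_nonneg_right _ (hρ'pos u (le_trans hk0 hu.1)).le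
        rw [hvdef]
        apply Real.exp_le_exp.mpr
        have hgu : g u ≤ g ((k:ℝ)+1) := hgmono (mem_Ici.mpr (le_trans hk0 hu.1)) (mem_Ici.mpr (by positivity)) hu.2
        nlinarith [hx0]
    have hsum_int : ∑ k ∈ Finset.range N, v k * (ρ ((k:ℝ)+1) - ρ (k:ℝ)) ≤ Φ x := by
      calc ∑ k ∈ Finset.range N, v k * (ρ ((k:ℝ)+1) - ρ (k:ℝ))
          ≤ ∑ k ∈ Finset.range N, ∫ u in (k:ℝ)..((k:ℝ)+1), h u :=
            Finset.sum_le_sum fun k _ => hterm k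
        _ = ∫ u in (0:ℝ)..(N:ℝ), h u := by
            have := intervalIntegral.sum_integral_adjacent_intervals
              (a := fun k : ℕ => (k:ℝ)) (μ := volume) (f := h) (n := N) ?_
            · simpa using this
            · intro k hk
              apply ContinuousOn.intervalIntegrable
              apply hhcont.mono
              rw [uIcc_of_le (by push_cast; linarith)]
              intro u hu
              exact le_trans (Nat.cast_nonneg k) hu.1
        _ = ∫ u in Ioc (0:ℝ) (N:ℝ), h u := by
            rw [intervalIntegral.integral_of_le (Nat.cast_nonneg N)]
        _ ≤ ∫ u in Ioi (0:ℝ), h u := by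
            apply setIntegral_mono_set hint
            · apply (ae_restrict_iff' measurableSet_Ioi).mpr
              exact Filter.Eventually.of_forall fun u hu => hhnonneg u (le_of_lt hu)
            · exact HasSubset.Subset.eventuallyLE Ioc_subset_Ioi_self
        _ = Φ x := (hΦ x).symm
    have hv0 : v 0 * ρ 0 ≤ K := by
      rw [hvdef, hKdef]
      simp only [Nat.cast_zero, zero_add]
      apply mul_le_mul_of_nonneg_right _ (hρpos 0 le_rfl).le
      apply Real.exp_le_exp.mpr
      calc -x * g 1 ≤ |(-x) * g 1| := le_abs_self _
        _ = x * |g 1| := by rw [abs_mul, abs_neg, abs_of_pos hx0]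
        _ ≤ 1 * |g 1| := mul_le_mul_of_nonneg_right hx1 (abs_nonneg _)
        _ = |g 1| := one_mul _
    have hΦpos : 0 ≤ Φ x := by
      have : (0:ℝ) < K := mul_pos (Real.exp_pos _) (hρpos 0 le_rfl)
      linarith
    calc M' * (v 0 * ρ 0 + ∑ k ∈ Finset.range N, v k * (ρ ((k:ℝ)+1) - ρ (k:ℝ)))
        ≤ M' * (K + Φ x) := by
          apply mul_le_mul_of_nonneg_left _ hM'pos.le
          exact add_le_add hv0 hsum_int
      _ ≤ M' * (Φ x + Φ x) := by
          apply mul_le_mul_of_nonneg_left _ hM'pos.le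
          exact add_le_add_left hΦK _
      _ = 2 * M' * Φ x := by ring
  -- conclude via the limit of partial sums
  have htend : Tendsto (fun N => ‖∑ k ∈ Finset.range N, F k‖) atTop (nhds ‖∑' k, F k‖) :=
    (hsumF.hasSum.tendsto_sum_nat).norm
  exact le_of_tendsto htend (Filter.Eventually.of_forall hpartial)
end

section
/- For every z ∈ ℂ with Re z > 0, ∑_{k=1}^∞ exp(−z·k²) = (1/2)·√(π/z) − 1/2 + √(π/z)·∑_{k=1}^∞ exp(−k²π²/z), where √(π/z) denotes the principal branch of the square root. -/
open Complex

/-- Jacobi-theta–type identity (Proposition 4): for `Re z > 0`,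
`∑_{k=1}^∞ exp(−z·k²) = (1/2)·√(π/z) − 1/2 + √(π/z)·∑_{k=1}^∞ exp(−k²π²/z)`,
with the principal branch of the square root. -/
theorem stmt6 (z : ℂ) (hz : 0 < z.re) :
    ∑' k : ℕ, Complex.exp (-z * ((k : ℂ) + 1) ^ 2) =
      (↑Real.pi / z) ^ (1/2 : ℂ) / 2 - 1/2 +
        (↑Real.pi / z) ^ (1/2 : ℂ) *
          ∑' k : ℕ, Complex.exp (-(((k : ℂ) + 1) ^ 2 * (↑Real.pi) ^ 2) / z) := by
  have hπ : (0:ℝ) < Real.pi := Real.pi_pos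
  have hπ0 : (Real.pi : ℂ) ≠ 0 := by exact_mod_cast hπ.ne'
  have hz0 : z ≠ 0 := by
    intro h; rw [h] at hz; simp at hz
  have hτim : 0 < (I * z / (Real.pi : ℂ)).im := by
    rw [div_ofReal_im]
    simpa using div_pos hz hπ
  set τ : UpperHalfPlane := ⟨I * z / (Real.pi : ℂ), hτim⟩ with hτ
  have hc : (τ : ℂ) = I * z / (Real.pi : ℂ) := rfl
  have hSτ : ((ModularGroup.S • τ : UpperHalfPlane) : ℂ) = (Real.pi : ℂ) * I / z := by
    rw [UpperHalfPlane.modular_S_smul, UpperHalfPlane.coe_mk, hc]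
    field_simp
    linear_combination (-1) * I_sq
  have key := jacobiTheta_S_smul τ
  rw [hSτ] at key
  have hτc : -I * (τ : ℂ) = z / (Real.pi : ℂ) := by
    rw [hc]
    field_simp
    linear_combination (-1) * I_sq
  rw [hτc] at key
  -- expand both thetas as sums over ℕ
  have h1 : jacobiTheta ((Real.pi : ℂ) * I / z) =
      1 + 2 * ∑' k : ℕ, Complex.exp (-(((k : ℂ) + 1) ^ 2 * (Real.pi : ℂ) ^ 2) / z) := by
    rw [jacobiTheta_eq_tsum_nat (by rw [← hSτ]; exact (ModularGroup.S • τ).2)]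
    congr 1
    congr 1
    refine tsum_congr fun k => ?_
    congr 1
    field_simp
    ring_nf
    simp [I_sq]
  have h2 : jacobiTheta (τ : ℂ) =
      1 + 2 * ∑' k : ℕ, Complex.exp (-z * ((k : ℂ) + 1) ^ 2) := by
    rw [hc, jacobiTheta_eq_tsum_nat hτim]
    congr 1
    congr 1
    refine tsum_congr fun k => ?_
    congr 1
    field_simp
    linear_combination I_sq
  rw [h1, h2] at key
  -- relate the two square roots
  have harg : (z / (Real.pi : ℂ)).arg ≠ Real.pi := by
    intro h
    have := Complex.arg_eq_pi_iff.mp h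
    rw [div_ofReal_re] at this
    exact absurd (this.1) (not_lt.mpr (div_pos hz hπ).le)
  have hinv : ((Real.pi : ℂ) / z) ^ (1/2 : ℂ) = ((z / (Real.pi : ℂ)) ^ (1/2 : ℂ))⁻¹ := by
    rw [← Complex.inv_cpow _ _ harg, inv_div]
  have hne : (z / (Real.pi : ℂ)) ^ (1/2 : ℂ) ≠ 0 := by
    rw [Ne, cpow_eq_zero_iff, not_and_or]
    exact Or.inl (div_ne_zero hz0 hπ0)
  have hst : ((Real.pi : ℂ) / z) ^ (1/2 : ℂ) * ((z / (Real.pi : ℂ)) ^ (1/2 : ℂ)) = 1 := by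
    rw [hinv, inv_mul_cancel₀ hne]
  linear_combination (-(((Real.pi : ℂ) / z) ^ (1/2 : ℂ)) / 2) * key +
    (-(∑' k : ℕ, Complex.exp (-z * ((k : ℂ) + 1) ^ 2)) - 1/2) * hst
end

section
/- Let b ≥ 2 be an integer and let s ∈ ℝ be irrational. Then lim_{x→0⁺} x^{1/b}·∑_{k=1}^∞ exp(−k^b·(x + 2πi·s)) = 0. (Hence, since this limit equals Γ(1+1/b)·(1/n)·∑_{l=1}^n exp(−2πi·(m/n)·l^b) at rationals s = m/n, the rescaled boundary profile x^{1/b}·f(x + 2πi·s) vanishes in the limit for Lebesgue-almost every s.) -/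
open Filter MeasureTheory Set

open Finset Polynomial

noncomputable def ee (t : ℝ) : ℂ := Complex.exp (2 * Real.pi * Complex.I * t)

lemma ee_norm (t : ℝ) : ‖ee t‖ = 1 := by
  unfold ee
  rw [Complex.norm_exp]
  convert Real.exp_zero using 2
  simp [Complex.mul_re, Complex.mul_im]

lemma ee_add (a b : ℝ) : ee (a + b) = ee a * ee b := by
  unfold ee
  rw [← Complex.exp_add]
  congr 1
  push_cast
  ring

lemma ee_conj (t : ℝ) : (starRingEnd ℂ) (ee t) = ee (-t) := by
  unfold ee
  rw [← Complex.exp_conj]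
  congr 1
  simp only [map_mul, Complex.conj_I, Complex.conj_ofReal, map_ofNat]
  push_cast
  ring

lemma ee_nat_mul (c : ℝ) (n : ℕ) : ee (c * n) = (ee c) ^ n := by
  unfold ee
  rw [← Complex.exp_nat_mul]
  congr 1
  push_cast
  ring

lemma ee_ne_one {c : ℝ} (hc : Irrational c) : ee c ≠ 1 := by
  intro h
  rw [ee, Complex.exp_eq_one_iff] at h
  obtain ⟨n, hn⟩ := h
  have h2 : (2 * Real.pi * Complex.I) ≠ 0 := by
    simp [Complex.I_ne_zero, Real.pi_ne_zero, Complex.ofReal_ne_zero]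
  have hcn : (c : ℂ) = (n : ℂ) := by
    have : 2 * (Real.pi:ℂ) * Complex.I * (c:ℂ) = 2 * (Real.pi:ℂ) * Complex.I * (n:ℂ) := by
      rw [hn]; ring
    exact mul_left_cancel₀ h2 this
  have hcn' : c = (n : ℝ) := by exact_mod_cast hcn
  exact hc ⟨(n:ℚ), by rw [hcn']; push_cast; ring⟩


-- degree 1 case
lemma weyl_deg_one (p : ℝ[X]) (hdeg : p.natDegree ≤ 1) (hirr : Irrational (p.coeff 1))
    {ε : ℝ} (hε : 0 < ε) :
    ∃ N₀ : ℕ, ∀ N : ℕ, N₀ ≤ N → ‖∑ n ∈ range N, ee (p.eval (n : ℝ))‖ ≤ ε * N := by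
  have hz : ee (p.coeff 1) ≠ 1 := ee_ne_one hirr
  set z := ee (p.coeff 1) with hzdef
  have heval : ∀ n : ℕ, ee (p.eval (n : ℝ)) = ee (p.coeff 0) * z ^ n := by
    intro n
    have : p.eval (n : ℝ) = p.coeff 0 + p.coeff 1 * n := by
      rw [eval_eq_sum_range' (lt_of_le_of_lt hdeg one_lt_two)]
      rw [show (2:ℕ) = 1+1 from rfl, Finset.sum_range_succ, Finset.sum_range_one]
      push_cast
      ring
    rw [this, ee_add, ee_nat_mul]
  have hnorm : ∀ N : ℕ, ‖∑ n ∈ range N, ee (p.eval (n : ℝ))‖ ≤ 2 / ‖z - 1‖ := by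
    intro N
    simp only [heval, ← Finset.mul_sum]
    rw [norm_mul, ee_norm, one_mul, geom_sum_eq hz]
    rw [norm_div]
    have hz1 : 0 < ‖z - 1‖ := by
      rw [norm_pos_iff]; exact sub_ne_zero.mpr hz
    gcongr
    calc ‖z ^ N - 1‖ ≤ ‖z ^ N‖ + ‖(1:ℂ)‖ := norm_sub_le _ _
    _ ≤ 2 := by rw [norm_pow, ee_norm]; norm_num
  refine ⟨⌈(2 / ‖z - 1‖) / ε⌉₊ + 1, fun N hN => ?_⟩
  calc ‖∑ n ∈ range N, ee (p.eval (n : ℝ))‖ ≤ 2 / ‖z - 1‖ := hnorm N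
  _ ≤ ε * N := by
    have h1 : ((2 / ‖z - 1‖) / ε) ≤ (⌈(2 / ‖z - 1‖) / ε⌉₊ : ℝ) := Nat.le_ceil _
    have h2 : ((⌈(2 / ‖z - 1‖) / ε⌉₊ + 1 : ℕ) : ℝ) ≤ N := by exact_mod_cast hN
    push_cast at h2
    rw [div_le_iff₀ hε] at h1
    nlinarith

-- difference polynomial
lemma diff_poly_coeff (p : ℝ[X]) (d : ℕ) (hdeg : p.natDegree ≤ d + 1) (h : ℕ) :
    ((taylor (h : ℝ) p - p).natDegree ≤ d) ∧
      ((taylor (h : ℝ) p - p).coeff d = (d + 1) * h * p.coeff (d + 1)) := by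
  constructor
  · rw [natDegree_le_iff_coeff_eq_zero]
    intro m hm
    rw [coeff_sub, taylor_coeff]
    rcases eq_or_lt_of_le (Nat.succ_le_of_lt hm) with hmd | hmd
    · -- m = d + 1
      have hd1 : (Polynomial.hasseDeriv m p).natDegree = 0 := by
        have := Polynomial.natDegree_hasseDeriv_le p m
        omega
      rw [Polynomial.eval_eq_sum_range' (by omega : (Polynomial.hasseDeriv m p).natDegree < 1)]
      simp [Polynomial.hasseDeriv_coeff]
    · -- m > d + 1 : both zero
      have h1 : p.coeff m = 0 := coeff_eq_zero_of_natDegree_lt (by omega)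
      have h2 : (Polynomial.hasseDeriv m p).eval (h:ℝ) = 0 := by
        have : Polynomial.hasseDeriv m p = 0 :=
          Polynomial.hasseDeriv_eq_zero_of_lt_natDegree p m (by omega)
        simp [this]
      rw [h1, h2, sub_zero]
  · rw [coeff_sub, taylor_coeff]
    have hle : (Polynomial.hasseDeriv d p).natDegree < 2 := by
      have := Polynomial.natDegree_hasseDeriv_le p d
      omega
    rw [Polynomial.eval_eq_sum_range' hle]
    rw [Finset.sum_range_succ, Finset.sum_range_one]
    simp only [Polynomial.hasseDeriv_coeff, pow_zero, pow_one, Nat.choose_self,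
      zero_add]
    rw [show (1+d) = d+1 from by omega, Nat.choose_succ_self_right]
    push_cast
    ring


-- generic: sum over Int Ico of a function supported on [0,N) equals nat range sum
lemma int_sum_eq_nat_sum (F : ℤ → ℂ) (N : ℕ) (a b : ℤ)
    (ha : a ≤ 0) (hb : (N:ℤ) ≤ b)
    (hF : ∀ m : ℤ, (m < 0 ∨ (N:ℤ) ≤ m) → F m = 0) :
    ∑ m ∈ Finset.Ico a b, F m = ∑ n ∈ range N, F (n : ℤ) := by
  rw [← Finset.sum_subset (Finset.Ico_subset_Ico ha hb)]
  · refine Finset.sum_nbij' (fun m => m.toNat) (fun n => (n : ℤ)) ?_ ?_ ?_ ?_ ?_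
    · intro m hm
      simp only [Finset.mem_Ico] at hm
      simp only [Finset.mem_range]
      omega
    · intro n hn
      simp only [Finset.mem_range] at hn
      simp only [Finset.mem_Ico]
      omega
    · intro m hm
      simp only [Finset.mem_Ico] at hm
      show ((m.toNat : ℕ) : ℤ) = m
      omega
    · intro n _
      show ((n:ℤ)).toNat = n
      omega
    · intro m hm
      simp only [Finset.mem_Ico] at hm
      congr 1
      show m = ((m.toNat : ℕ) : ℤ)
      omega
  · intro m hm hm'
    apply hF
    simp only [Finset.mem_Ico] at hm hm'
    omega

lemma int_sum_shift (F : ℤ → ℂ) (a b c : ℤ) :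
    ∑ m ∈ Finset.Ico a b, F (m + c) = ∑ m ∈ Finset.Ico (a + c) (b + c), F m := by
  rw [← Finset.map_add_right_Ico a b c, Finset.sum_map]
  rfl

theorem vdc (f : ℕ → ℂ) (hf : ∀ n, ‖f n‖ ≤ 1) (N H : ℕ) (hH : 1 ≤ H)
    (B : ℝ) (hB0 : 0 ≤ B)
    (hB : ∀ h : ℕ, 1 ≤ h → h < H →
      ‖∑ n ∈ range (N - h), f (n + h) * (starRingEnd ℂ) (f n)‖ ≤ B) :
    (H:ℝ)^2 * ‖∑ n ∈ range N, f n‖^2 ≤ ((N:ℝ) + H) * (H * N + H^2 * B) := by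
  classical
  set S := ∑ n ∈ range N, f n with hS
  set g : ℤ → ℂ := fun m => if 0 ≤ m ∧ m < (N:ℤ) then f m.toNat else 0 with hg
  have hg0 : ∀ m : ℤ, (m < 0 ∨ (N:ℤ) ≤ m) → g m = 0 := by
    intro m hm
    simp only [hg]
    rw [if_neg]
    omega
  have hgnat : ∀ n : ℕ, n < N → g (n : ℤ) = f n := by
    intro n hn
    simp only [hg]
    rw [if_pos (by omega)]
    simp
  set I : Finset ℤ := Finset.Ico (1 - (H:ℤ)) (N:ℤ) with hI
  set v : ℤ → ℂ := fun m => ∑ i ∈ range H, g (m + i) with hv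
  set T : ℕ → ℂ := fun h => ∑ n ∈ range (N - h), f (n + h) * (starRingEnd ℂ) (f n) with hT
  set A : ℕ → ℕ → ℂ := fun i j => ∑ m ∈ I, g (m + i) * (starRingEnd ℂ) (g (m + j)) with hA
  -- step 1
  have step1 : ∑ m ∈ I, v m = (H : ℂ) * S := by
    rw [hv, Finset.sum_comm]
    have : ∀ i ∈ range H, ∑ m ∈ I, g (m + (i:ℤ)) = S := by
      intro i hi
      simp only [Finset.mem_range] at hi
      rw [hI, int_sum_shift, int_sum_eq_nat_sum g N _ _ (by omega) (by omega) hg0]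
      exact Finset.sum_congr rfl (fun n hn => hgnat n (Finset.mem_range.mp hn))
    rw [Finset.sum_congr rfl this]
    simp [mul_comm]
  -- correlation identity
  have corr : ∀ i j : ℕ, j ≤ i → i < H → A i j = T (i - j) := by
    intro i j hji hiH
    set h : ℕ := i - j with hh
    have hij : (i : ℤ) = (j : ℤ) + (h : ℤ) := by push_cast; omega
    simp only [hA, hI]
    have e1 : ∑ m ∈ Finset.Ico (1 - (H:ℤ)) (N:ℤ), g (m + i) * (starRingEnd ℂ) (g (m + j))
        = ∑ m ∈ Finset.Ico (1 - (H:ℤ)) (N:ℤ),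
            (fun m' => g (m' + h) * (starRingEnd ℂ) (g m')) (m + (j:ℤ)) := by
      refine Finset.sum_congr rfl (fun m _ => ?_)
      show g (m + i) * (starRingEnd ℂ) (g (m + j)) = g (m + (j:ℤ) + (h:ℤ)) * (starRingEnd ℂ) (g (m + (j:ℤ)))
      congr 2
      omega
    have e2 := int_sum_shift (fun m' => g (m' + (h:ℤ)) * (starRingEnd ℂ) (g m'))
      (1 - (H:ℤ)) (N:ℤ) (j:ℤ)
    rw [e1, e2]
    rw [int_sum_eq_nat_sum _ N _ _ (by omega) (by omega)
      (by
        intro m hm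
        have : g m = 0 := hg0 m hm
        simp [this])]
    show _ = T h
    rw [hT]
    rw [← Finset.sum_subset (Finset.range_subset_range.mpr (Nat.sub_le N h))]
    · refine Finset.sum_congr rfl ?_
      intro n hn
      simp only [Finset.mem_range] at hn
      have h1 : g ((n:ℤ) + (h:ℤ)) = f (n + h) := by
        have : ((n:ℤ) + (h:ℤ)) = ((n + h : ℕ) : ℤ) := by push_cast; ring
        rw [this, hgnat _ (by omega)]
      have h2 : g (n : ℤ) = f n := hgnat n (by omega)
      rw [h1, h2]
    · intro n hn hn'
      simp only [Finset.mem_range] at hn hn'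
      have : g ((n:ℤ) + (h:ℤ)) = 0 := by
        apply hg0
        right
        omega
      rw [this, zero_mul]
  have symm : ∀ i j : ℕ, A j i = (starRingEnd ℂ) (A i j) := by
    intro i j
    simp only [hA]
    rw [map_sum]
    refine Finset.sum_congr rfl (fun m _ => ?_)
    rw [map_mul, Complex.conj_conj, mul_comm]
  have normT0 : ‖T 0‖ ≤ (N : ℝ) := by
    rw [hT]
    calc ‖∑ n ∈ range (N - 0), f (n + 0) * (starRingEnd ℂ) (f n)‖
        ≤ ∑ n ∈ range (N - 0), ‖f (n + 0) * (starRingEnd ℂ) (f n)‖ := norm_sum_le _ _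
      _ ≤ ∑ n ∈ range (N - 0), 1 := by
          refine Finset.sum_le_sum (fun n _ => ?_)
          rw [norm_mul, RCLike.norm_conj]
          simp only [Nat.add_zero]
          exact mul_le_one₀ (hf n) (norm_nonneg _) (hf n)
      _ ≤ (N : ℝ) := by simp
  have normA : ∀ i ∈ range H, ∀ j ∈ range H,
      ‖A i j‖ ≤ (if i = j then (N:ℝ) else 0) + B := by
    intro i hi j hj
    simp only [Finset.mem_range] at hi hj
    rcases eq_or_ne i j with hij | hij
    · rw [if_pos hij, hij, corr j j le_rfl hj]
      simpa using le_add_of_le_of_nonneg normT0 hB0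
    · rw [if_neg hij, zero_add]
      rcases lt_or_gt_of_ne hij with hlt | hgt
      · rw [symm j i, RCLike.norm_conj, corr j i (le_of_lt hlt) hj]
        exact hB (j - i) (by omega) (by omega)
      · rw [corr i j (le_of_lt hgt) hi]
        exact hB (i - j) (by omega) (by omega)
  -- step 3: sum of |v|^2
  have step3 : ∑ m ∈ I, ‖v m‖^2 = (∑ i ∈ range H, ∑ j ∈ range H, A i j).re := by
    have expand : ∀ m : ℤ, (‖v m‖^2 : ℝ) =
        (∑ i ∈ range H, ∑ j ∈ range H, g (m + i) * (starRingEnd ℂ) (g (m + j))).re := by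
      intro m
      have h1 : v m * (starRingEnd ℂ) (v m)
          = ∑ i ∈ range H, ∑ j ∈ range H, g (m + i) * (starRingEnd ℂ) (g (m + j)) := by
        rw [hv, map_sum, Finset.sum_mul_sum]
      have h2 : (v m * (starRingEnd ℂ) (v m)).re = ‖v m‖^2 := by
        rw [Complex.mul_conj]
        simp [Complex.sq_norm]
      rw [← h2, h1]
    rw [Finset.sum_congr rfl (fun m _ => expand m)]
    rw [← Complex.re_sum]
    congr 1
    rw [Finset.sum_comm]
    refine Finset.sum_congr rfl (fun i _ => ?_)
    rw [Finset.sum_comm]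
  -- step 4+6
  have step46 : ∑ m ∈ I, ‖v m‖^2 ≤ (H:ℝ) * N + H^2 * B := by
    rw [step3]
    calc (∑ i ∈ range H, ∑ j ∈ range H, A i j).re
        ≤ ‖∑ i ∈ range H, ∑ j ∈ range H, A i j‖ := Complex.re_le_norm _
      _ ≤ ∑ i ∈ range H, ‖∑ j ∈ range H, A i j‖ := norm_sum_le _ _
      _ ≤ ∑ i ∈ range H, ∑ j ∈ range H, ‖A i j‖ :=
          Finset.sum_le_sum (fun i _ => norm_sum_le _ _)
      _ ≤ ∑ i ∈ range H, ∑ j ∈ range H, ((if i = j then (N:ℝ) else 0) + B) :=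
          Finset.sum_le_sum (fun i hi => Finset.sum_le_sum (fun j hj => normA i hi j hj))
      _ = (H:ℝ) * N + H^2 * B := by
          simp only [Finset.sum_add_distrib, Finset.sum_const, Finset.card_range,
            nsmul_eq_mul]
          rw [Finset.sum_congr rfl (fun i (hi : i ∈ range H) =>
            Finset.sum_ite_eq (range H) i (fun _ => (N:ℝ)))]
          rw [Finset.sum_congr rfl (fun i (hi : i ∈ range H) => if_pos hi)]
          simp only [Finset.sum_const, Finset.card_range, nsmul_eq_mul]
          ring
  -- step 2: Cauchy-Schwarz
  have cardI : ((I.card : ℝ)) ≤ (N:ℝ) + H := by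
    rw [hI, Int.card_Ico]
    have : ((N:ℤ) - (1 - (H:ℤ))).toNat ≤ N + H := by omega
    calc (((((N:ℤ) - (1 - (H:ℤ))).toNat : ℕ)) : ℝ) ≤ ((N + H : ℕ) : ℝ) := by exact_mod_cast this
      _ = (N:ℝ) + H := by push_cast; ring
  have step2 : ((H:ℝ))^2 * ‖S‖^2 ≤ (I.card : ℝ) * ∑ m ∈ I, ‖v m‖^2 := by
    have h1 : (H:ℝ)^2 * ‖S‖^2 = ‖(H:ℂ) * S‖^2 := by
      rw [norm_mul, mul_pow]
      norm_num
    rw [h1, ← step1]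
    calc ‖∑ m ∈ I, v m‖^2 ≤ (∑ m ∈ I, ‖v m‖)^2 := by
          have := norm_sum_le I v
          exact pow_le_pow_left₀ (norm_nonneg _) this 2
      _ = (∑ m ∈ I, 1 * ‖v m‖)^2 := by simp
      _ ≤ (∑ m ∈ I, (1:ℝ)^2) * ∑ m ∈ I, ‖v m‖^2 := Finset.sum_mul_sq_le_sq_mul_sq I _ _
      _ = (I.card : ℝ) * ∑ m ∈ I, ‖v m‖^2 := by simp
  -- combine
  have hv2 : 0 ≤ ∑ m ∈ I, ‖v m‖^2 := Finset.sum_nonneg (fun m _ => sq_nonneg _)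
  calc (H:ℝ)^2 * ‖S‖^2 ≤ (I.card : ℝ) * ∑ m ∈ I, ‖v m‖^2 := step2
    _ ≤ ((N:ℝ) + H) * ((H:ℝ) * N + H^2 * B) := by
        apply mul_le_mul cardI step46 hv2
        positivity


theorem weyl_main (d : ℕ) (hd : 1 ≤ d) :
    ∀ p : ℝ[X], p.natDegree ≤ d → Irrational (p.coeff d) →
    ∀ ε : ℝ, 0 < ε → ∃ N₀ : ℕ, ∀ N, N₀ ≤ N →
      ‖∑ n ∈ range N, ee (p.eval (n:ℝ))‖ ≤ ε * N := by
  induction d, hd using Nat.le_induction with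
  | base => exact fun p hdeg hirr ε hε => weyl_deg_one p hdeg hirr hε
  | succ d hd IH =>
    intro p hdeg hirr ε hε
    set ε' : ℝ := ε^2/8 with hε'def
    have hε' : 0 < ε' := by positivity
    set H : ℕ := ⌈(8:ℝ)/ε^2⌉₊ + 1 with hHdef
    have hH1 : 1 ≤ H := by omega
    have hH8 : (8:ℝ)/ε^2 ≤ H := by
      calc (8:ℝ)/ε^2 ≤ ⌈(8:ℝ)/ε^2⌉₊ := Nat.le_ceil _
        _ ≤ H := by rw [hHdef]; push_cast; linarith
    -- for each 1 ≤ h < H get a threshold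
    have key : ∀ h : ℕ, 1 ≤ h → h < H → ∃ Nh : ℕ, ∀ M, Nh ≤ M →
        ‖∑ n ∈ range M, ee ((taylor (h:ℝ) p - p).eval (n:ℝ))‖ ≤ ε' * M := by
      intro h hh1 hhH
      obtain ⟨hq1, hq2⟩ := diff_poly_coeff p d hdeg h
      refine IH (taylor (h:ℝ) p - p) hq1 ?_ ε' hε'
      rw [hq2]
      have : ((d:ℝ) + 1) * (h:ℝ) = (((d+1) * h : ℕ) : ℝ) := by push_cast; ring
      rw [this]
      exact hirr.natCast_mul (by positivity)
    -- uniform threshold by finite induction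
    have unif : ∀ K : ℕ, ∃ NK : ℕ, ∀ h : ℕ, 1 ≤ h → h < H → h < K → ∀ M, NK ≤ M →
        ‖∑ n ∈ range M, ee ((taylor (h:ℝ) p - p).eval (n:ℝ))‖ ≤ ε' * M := by
      intro K
      induction K with
      | zero => exact ⟨0, fun h _ _ h0 => by omega⟩
      | succ K ihK =>
        obtain ⟨NK, hNK⟩ := ihK
        by_cases hK : 1 ≤ K ∧ K < H
        · obtain ⟨NK', hNK'⟩ := key K hK.1 hK.2
          refine ⟨max NK NK', fun h h1 h2 h3 M hM => ?_⟩
          rcases Nat.lt_succ_iff_lt_or_eq.mp h3 with hlt | heq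
          · exact hNK h h1 h2 hlt M (le_trans (le_max_left _ _) hM)
          · subst heq; exact hNK' M (le_trans (le_max_right _ _) hM)
        · refine ⟨NK, fun h h1 h2 h3 M hM => ?_⟩
          have : h < K := by omega
          exact hNK h h1 h2 this M hM
    obtain ⟨NH, hNH⟩ := unif H
    refine ⟨NH + H + 1, fun N hN => ?_⟩
    have hHN : H ≤ N := by omega
    set f : ℕ → ℂ := fun n => ee (p.eval (n:ℝ)) with hfdef
    have hsum : ∀ h : ℕ, 1 ≤ h → h < H →
        ‖∑ n ∈ range (N - h), f (n + h) * (starRingEnd ℂ) (f n)‖ ≤ ε' * N := by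
      intro h h1 h2
      have heq : ∀ n : ℕ, f (n + h) * (starRingEnd ℂ) (f n)
          = ee ((taylor (h:ℝ) p - p).eval (n:ℝ)) := by
        intro n
        rw [hfdef]
        simp only []
        rw [ee_conj, ← ee_add]
        congr 1
        rw [eval_sub, taylor_eval]
        push_cast
        ring
      rw [Finset.sum_congr rfl (fun n _ => heq n)]
      calc ‖∑ n ∈ range (N - h), ee ((taylor (h:ℝ) p - p).eval (n:ℝ))‖
          ≤ ε' * (N - h : ℕ) := hNH h h1 h2 h2 (N - h) (by omega)
        _ ≤ ε' * N := by
            apply mul_le_mul_of_nonneg_left _ hε'.le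
            exact_mod_cast Nat.sub_le N h
    have hvdc := vdc f (fun n => le_of_eq (ee_norm _)) N H hH1 (ε' * N)
      (by positivity) hsum
    -- now extract
    have hN1 : (1:ℝ) ≤ N := by exact_mod_cast Nat.one_le_iff_ne_zero.mpr (by omega)
    have hHR : (1:ℝ) ≤ H := by exact_mod_cast hH1
    have hNH' : (H:ℝ) ≤ N := by exact_mod_cast hHN
    have hsq : ‖∑ n ∈ range N, f n‖^2 ≤ (ε * N)^2 := by
      have hH2 : (0:ℝ) < (H:ℝ)^2 := by positivity
      rw [← mul_le_mul_iff_right₀ hH2]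
      calc (H:ℝ)^2 * ‖∑ n ∈ range N, f n‖^2
          ≤ ((N:ℝ) + H) * (H * N + H^2 * (ε' * N)) := hvdc
        _ ≤ (2*N) * (H * N + H^2 * (ε' * N)) := by
            apply mul_le_mul_of_nonneg_right (by linarith)
            positivity
        _ = (H:ℝ)^2 * N^2 * (2/H + 2*ε') := by field_simp
        _ ≤ (H:ℝ)^2 * N^2 * (ε^2/4 + ε^2/4) := by
            apply mul_le_mul_of_nonneg_left _ (by positivity)
            have h2H : 2/(H:ℝ) ≤ ε^2/4 := by
              rw [div_le_div_iff₀ (by linarith) (by norm_num)]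
              rw [div_le_iff₀ (by positivity : (0:ℝ) < ε^2)] at hH8
              nlinarith
            have h2e : 2*ε' = ε^2/4 := by rw [hε'def]; ring
            linarith
        _ = (H:ℝ)^2 * ((ε*N)^2) * (1/2) := by ring
        _ ≤ (H:ℝ)^2 * (ε * N)^2 := by nlinarith [sq_nonneg (ε*(N:ℝ)), hH2]
    have := le_of_pow_le_pow_left₀ two_ne_zero (by positivity) hsq
    exact this


-- weight sum bound
lemma wsum (b : ℕ) (hb : 1 ≤ b) {y : ℝ} (hy : 0 < y) (M : ℕ) :
    ∑ k ∈ range M, Real.exp (-(((k:ℝ)+1))^b * y^b) ≤ 2 / y := by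
  have key : ∀ k : ℕ, Real.exp (-(((k:ℝ)+1))^b * y^b)
      ≤ (if ((k:ℝ)+1) * y ≤ 1 then (1:ℝ) else 0) + Real.exp (-(((k:ℝ)+1) * y)) := by
    intro k
    by_cases hk : ((k:ℝ)+1) * y ≤ 1
    · rw [if_pos hk]
      have h1 : Real.exp (-(((k:ℝ)+1))^b * y^b) ≤ 1 := by
        rw [Real.exp_le_one_iff]
        have : (0:ℝ) ≤ (((k:ℝ)+1))^b * y^b := by positivity
        linarith
      have h2 : (0:ℝ) ≤ Real.exp (-(((k:ℝ)+1) * y)) := Real.exp_nonneg _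
      linarith
    · rw [if_neg hk, zero_add]
      push_neg at hk
      apply Real.exp_le_exp.mpr
      have h3 : ((k:ℝ)+1) * y ≤ (((k:ℝ)+1))^b * y^b := by
        rw [← mul_pow]
        exact le_self_pow₀ (by linarith) (by omega)
      linarith
  calc ∑ k ∈ range M, Real.exp (-(((k:ℝ)+1))^b * y^b)
      ≤ ∑ k ∈ range M, ((if ((k:ℝ)+1) * y ≤ 1 then (1:ℝ) else 0)
          + Real.exp (-(((k:ℝ)+1) * y))) := Finset.sum_le_sum (fun k _ => key k)
    _ = (∑ k ∈ range M, (if ((k:ℝ)+1) * y ≤ 1 then (1:ℝ) else 0))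
          + ∑ k ∈ range M, Real.exp (-(((k:ℝ)+1) * y)) := Finset.sum_add_distrib
    _ ≤ 1/y + 1/y := by
        gcongr ?_ + ?_
        · -- indicator count
          have hsub : (range M).filter (fun k : ℕ => ((k:ℝ)+1) * y ≤ 1) ⊆ range ⌊1/y⌋₊ := by
            intro k hk
            simp only [Finset.mem_filter, Finset.mem_range] at hk ⊢
            have h1 : ((k:ℝ)+1) ≤ 1/y := by
              rw [le_div_iff₀ hy]; exact hk.2
            have : (k+1 : ℕ) ≤ ⌊1/y⌋₊ := Nat.le_floor (by push_cast; linarith)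
            omega
          calc ∑ k ∈ range M, (if ((k:ℝ)+1) * y ≤ 1 then (1:ℝ) else 0)
              = ((range M).filter (fun k : ℕ => ((k:ℝ)+1) * y ≤ 1)).card :=
                by rw [Finset.sum_boole]
            _ ≤ (range ⌊1/y⌋₊).card := by exact_mod_cast Finset.card_le_card hsub
            _ ≤ 1/y := by
                rw [Finset.card_range]
                exact Nat.floor_le (by positivity)
        · -- geometric
          set r : ℝ := Real.exp (-y) with hr
          have hr0 : 0 < r := Real.exp_pos _
          have hr1 : r < 1 := by
            rw [hr, Real.exp_lt_one_iff]; linarith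
          have hterm : ∀ k : ℕ, Real.exp (-(((k:ℝ)+1) * y)) = r^(k+1) := by
            intro k
            rw [hr, ← Real.exp_nat_mul]
            congr 1
            push_cast
            ring
          rw [Finset.sum_congr rfl (fun k _ => hterm k)]
          have hgeom : ∑ k ∈ range M, r^(k+1) = r * ∑ k ∈ range M, r^k := by
            rw [Finset.mul_sum]
            exact Finset.sum_congr rfl (fun k _ => by ring)
          rw [hgeom, geom_sum_eq (by linarith) M]
          have h1r : 0 < 1 - r := by linarith
          have hrM : 0 ≤ r^M := by positivity
          have key2 : r * y ≤ 1 - r := by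
            have := Real.add_one_le_exp y
            have h2 : (y + 1) * r ≤ Real.exp y * r := by
              apply mul_le_mul_of_nonneg_right _ hr0.le
              linarith
            rw [hr, ← Real.exp_add] at h2
            simp at h2
            nlinarith
          have h1 : r - 1 ≠ 0 := by linarith
          have e : r * ((r^M - 1)/(r-1)) = (r * (1 - r^M))/(1-r) := by
            field_simp
            ring
          rw [e, div_le_div_iff₀ h1r hy]
          nlinarith [mul_nonneg (mul_nonneg hr0.le hrM) hy.le]
    _ = 2/y := by ring


-- Abel summation bound
lemma abel_bound (c : ℕ → ℂ) (a : ℕ → ℝ) (ε C : ℝ) (hε : 0 ≤ ε) (hC : 0 ≤ C)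
    (ha0 : ∀ k, 0 ≤ a k) (ha : ∀ k, a (k+1) ≤ a k)
    (hc : ∀ n : ℕ, ‖∑ k ∈ range n, c k‖ ≤ ε * n + C) :
    ∀ M : ℕ, ‖∑ k ∈ range M, (a k : ℂ) * c k‖ ≤ ε * (∑ k ∈ range M, a k) + C * a 0 := by
  -- identity
  have idt : ∀ M : ℕ, a M * (ε * (M+1) + C) + ∑ i ∈ range M, (a i - a (i+1)) * (ε*((i:ℝ)+1) + C)
      = ε * (∑ i ∈ range (M+1), a i) + C * a 0 := by
    intro M
    induction M with
    | zero => simp; ring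
    | succ M ih =>
      rw [Finset.sum_range_succ, Finset.sum_range_succ (f := a)]
      push_cast
      push_cast at ih
      linear_combination ih
  intro M
  rcases Nat.eq_zero_or_pos M with hM | hM
  · subst hM
    simp only [Finset.range_zero, Finset.sum_empty, norm_zero]
    nlinarith [mul_nonneg hC (ha0 0)]
  obtain ⟨M', rfl⟩ : ∃ M', M = M' + 1 := ⟨M - 1, by omega⟩
  have hby := Finset.sum_range_by_parts (fun k => ((a k : ℝ) : ℂ)) c (M' + 1)
  simp only [Nat.add_sub_cancel, smul_eq_mul] at hby
  rw [hby]
  have hstep : ∀ i : ℕ, ‖(((a (i+1) : ℝ) : ℂ) - ((a i : ℝ):ℂ)) * ∑ j ∈ range (i+1), c j‖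
      ≤ (a i - a (i+1)) * (ε * ((i:ℝ)+1) + C) := by
    intro i
    rw [norm_mul]
    have h1 : ‖(((a (i+1) : ℝ) : ℂ) - ((a i : ℝ):ℂ))‖ = a i - a (i+1) := by
      rw [← Complex.ofReal_sub, Complex.norm_real, Real.norm_eq_abs, abs_of_nonpos (by linarith [ha i])]
      ring
    rw [h1]
    apply mul_le_mul_of_nonneg_left _ (by linarith [ha i])
    have := hc (i+1)
    push_cast at this
    exact this
  calc ‖((a (M') : ℝ):ℂ) * ∑ j ∈ range (M'+1), c j
        - ∑ i ∈ range M', (((a (i+1) : ℝ):ℂ) - ((a i : ℝ):ℂ)) * ∑ j ∈ range (i+1), c j‖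
      ≤ ‖((a (M') : ℝ):ℂ) * ∑ j ∈ range (M'+1), c j‖
        + ‖∑ i ∈ range M', (((a (i+1) : ℝ):ℂ) - ((a i : ℝ):ℂ)) * ∑ j ∈ range (i+1), c j‖ :=
        norm_sub_le _ _
    _ ≤ a M' * (ε * (M'+1) + C)
        + ∑ i ∈ range M', (a i - a (i+1)) * (ε * ((i:ℝ)+1) + C) := by
        gcongr ?_ + ?_
        · rw [norm_mul, Complex.norm_real, Real.norm_eq_abs, abs_of_nonneg (ha0 _)]
          apply mul_le_mul_of_nonneg_left _ (ha0 _)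
          have := hc (M'+1)
          push_cast at this
          exact this
        · calc ‖∑ i ∈ range M', (((a (i+1) : ℝ):ℂ) - ((a i : ℝ):ℂ)) * ∑ j ∈ range (i+1), c j‖
              ≤ ∑ i ∈ range M', ‖(((a (i+1) : ℝ):ℂ) - ((a i : ℝ):ℂ)) * ∑ j ∈ range (i+1), c j‖ :=
              norm_sum_le _ _
            _ ≤ ∑ i ∈ range M', (a i - a (i+1)) * (ε * ((i:ℝ)+1) + C) :=
              Finset.sum_le_sum (fun i _ => hstep i)
    _ = ε * (∑ i ∈ range (M'+1), a i) + C * a 0 := idt M'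


/-- Vanishing of the rescaled boundary profile at irrational points (integer `b ≥ 2`):
`x^{1/b}·∑_{k=1}^∞ exp(−k^b·(x + 2πi·s)) → 0` as `x → 0⁺`, for irrational `s`. -/
theorem stmt12 (b : ℕ) (hb : 2 ≤ b) (s : ℝ) (hs : Irrational s) :
    Tendsto (fun x : ℝ =>
        ((x ^ (1 / (b : ℝ)) : ℝ) : ℂ) *
          ∑' k : ℕ, Complex.exp (-((k : ℂ) + 1) ^ b *
            ((x : ℂ) + 2 * Real.pi * Complex.I * (s : ℂ))))
      (nhdsWithin 0 (Set.Ioi 0)) (nhds 0) := by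
  set p : ℝ[X] := Polynomial.C (-s) * (Polynomial.X + Polynomial.C 1)^b with hp
  have hmono : ((Polynomial.X + Polynomial.C (1:ℝ))^b).Monic := (monic_X_add_C (1:ℝ)).pow b
  have hdegX : ((Polynomial.X + Polynomial.C (1:ℝ))^b).natDegree = b := by
    rw [natDegree_pow, natDegree_X_add_C, mul_one]
  have hpdeg : p.natDegree ≤ b := by
    rw [hp]
    calc (Polynomial.C (-s) * (Polynomial.X + Polynomial.C 1)^b).natDegree
        ≤ ((Polynomial.X + Polynomial.C (1:ℝ))^b).natDegree := natDegree_C_mul_le _ _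
      _ = b := hdegX
  have hpcoeff : p.coeff b = -s := by
    rw [hp, coeff_C_mul]
    have h1 := hmono.coeff_natDegree
    rw [hdegX] at h1
    rw [h1, mul_one]
  have hirr : Irrational (p.coeff b) := by rw [hpcoeff]; exact hs.neg
  have heval : ∀ r : ℝ, p.eval r = -s * (r + 1)^b := by
    intro r
    simp [hp]
  rw [NormedAddCommGroup.tendsto_nhds_zero]
  intro ε hε
  obtain ⟨N₀, hN₀⟩ := weyl_main b (by omega) p hpdeg hirr (ε/8) (by positivity)
  have hN0R : (0:ℝ) ≤ N₀ := Nat.cast_nonneg _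
  have hSbound : ∀ n : ℕ, ‖∑ k ∈ range n, ee (p.eval (k:ℝ))‖ ≤ (ε/8) * n + N₀ := by
    intro n
    by_cases hn : N₀ ≤ n
    · have := hN₀ n hn
      linarith
    · push_neg at hn
      calc ‖∑ k ∈ range n, ee (p.eval (k:ℝ))‖ ≤ ∑ k ∈ range n, ‖ee (p.eval (k:ℝ))‖ :=
          norm_sum_le _ _
        _ = ∑ k ∈ range n, (1:ℝ) := Finset.sum_congr rfl (fun k _ => ee_norm _)
        _ = n := by simp
        _ ≤ (N₀ : ℝ) := by exact_mod_cast hn.le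
        _ ≤ (ε/8) * n + N₀ := by
            have : (0:ℝ) ≤ ε/8 * n := by positivity
            linarith
  set δ : ℝ := min 1 ((ε/(2*((N₀:ℝ)+1)))^b) with hδ
  have hδpos : 0 < δ := lt_min one_pos (by positivity)
  filter_upwards [Ioo_mem_nhdsGT_of_mem (Set.left_mem_Ico.mpr hδpos)] with x hx
  obtain ⟨hx0, hxδ⟩ := hx
  have hx1 : x ≤ 1 := le_trans hxδ.le (min_le_left _ _)
  have hbne : ((b:ℝ)) ≠ 0 := Nat.cast_ne_zero.mpr (by omega)
  set y : ℝ := x ^ ((1:ℝ)/(b:ℝ)) with hy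
  have hy0 : 0 < y := Real.rpow_pos_of_pos hx0 _
  have hyb : y^b = x := by
    rw [hy, ← Real.rpow_natCast (x ^ ((1:ℝ)/(b:ℝ))) b, ← Real.rpow_mul hx0.le]
    rw [one_div, inv_mul_cancel₀ hbne, Real.rpow_one]
  have hyε : y ≤ ε/(2*((N₀:ℝ)+1)) := by
    have hxb : x < (ε/(2*((N₀:ℝ)+1)))^b := lt_of_lt_of_le hxδ (min_le_right _ _)
    have h7 : y^b < (ε/(2*((N₀:ℝ)+1)))^b := by rw [hyb]; exact hxb
    exact (lt_of_pow_lt_pow_left₀ b (by positivity) h7).le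
  set a : ℕ → ℝ := fun k => Real.exp (-(((k:ℝ)+1))^b * x) with ha
  set c : ℕ → ℂ := fun k => ee (p.eval (k:ℝ)) with hc
  have ha0 : ∀ k, 0 ≤ a k := fun k => (Real.exp_pos _).le
  have ha1 : a 0 ≤ 1 := by
    rw [ha]
    simp only []
    rw [Real.exp_le_one_iff]
    have hp0 : (0:ℝ) < ((0:ℕ):ℝ)+1 := by norm_num
    nlinarith [pow_pos hp0 b, hx0]
  have hamono : ∀ k, a (k+1) ≤ a k := by
    intro k
    rw [ha]
    simp only []
    apply Real.exp_le_exp.mpr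
    have h1 : (((k:ℝ))+1)^b ≤ (((k:ℝ)+1)+1)^b :=
      pow_le_pow_left₀ (by positivity) (by linarith) b
    push_cast
    nlinarith [hx0.le]
  have hwsum : ∀ M, ∑ k ∈ range M, a k ≤ 2 / y := by
    intro M
    have h8 : ∀ k ∈ range M, a k = Real.exp (-(((k:ℝ)+1))^b * y^b) := by
      intro k _
      rw [ha, hyb]
    rw [Finset.sum_congr rfl h8]
    exact wsum b (by omega) hy0 M
  have hpartial : ∀ M, ‖∑ k ∈ range M, (a k : ℂ) * c k‖ ≤ (ε/8) * (2/y) + N₀ := by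
    intro M
    have h1 := abel_bound c a (ε/8) N₀ (by positivity) hN0R ha0 hamono hSbound M
    have h4 : (ε/8) * (∑ k ∈ range M, a k) ≤ (ε/8)*(2/y) :=
      mul_le_mul_of_nonneg_left (hwsum M) (by positivity)
    nlinarith [ha0 0]
  have hterm : ∀ k : ℕ, Complex.exp (-((k:ℂ)+1)^b * ((x:ℂ) + 2*(Real.pi:ℂ)*Complex.I*(s:ℂ)))
      = ((a k : ℝ):ℂ) * c k := by
    intro k
    rw [hc, ha]
    simp only []
    rw [heval, ee, Complex.ofReal_exp, ← Complex.exp_add]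
    congr 1
    push_cast
    ring
  have hsummable : Summable (fun k : ℕ =>
      Complex.exp (-((k:ℂ)+1)^b * ((x:ℂ) + 2*(Real.pi:ℂ)*Complex.I*(s:ℂ)))) := by
    apply Summable.of_norm_bounded (g := fun k : ℕ => Real.exp (-x)^(k+1))
    · exact (summable_nat_add_iff 1).mpr (summable_geometric_of_lt_one (Real.exp_nonneg _)
        (by rw [Real.exp_lt_one_iff]; linarith))
    · intro k
      rw [hterm k, norm_mul, Complex.norm_real, Real.norm_eq_abs, abs_of_nonneg (ha0 k)]
      have h5 : ‖c k‖ = 1 := by rw [hc]; exact ee_norm _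
      rw [h5, mul_one]
      have h9 : Real.exp (-x)^(k+1) = Real.exp ((((k:ℝ))+1) * (-x)) := by
        rw [← Real.exp_nat_mul]
        congr 1
        push_cast
        ring
      rw [ha]
      simp only []
      rw [h9]
      apply Real.exp_le_exp.mpr
      have h6 : ((k:ℝ)+1) ≤ ((k:ℝ)+1)^b := by
        calc ((k:ℝ)+1) = ((k:ℝ)+1)^1 := (pow_one _).symm
          _ ≤ ((k:ℝ)+1)^b := by
            have hk1 : (1:ℝ) ≤ (k:ℝ)+1 := by
              have : (0:ℝ) ≤ (k:ℝ) := Nat.cast_nonneg k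
              linarith
            exact pow_le_pow_right₀ hk1 (by omega)
      nlinarith [hx0.le]
  have htsum : ‖∑' k : ℕ, Complex.exp (-((k:ℂ)+1)^b * ((x:ℂ) + 2*(Real.pi:ℂ)*Complex.I*(s:ℂ)))‖
      ≤ (ε/8) * (2/y) + N₀ := by
    apply le_of_tendsto' hsummable.hasSum.tendsto_sum_nat.norm
    intro M
    rw [Finset.sum_congr rfl (fun k _ => hterm k)]
    exact hpartial M
  calc ‖((y:ℝ):ℂ) * ∑' k : ℕ, Complex.exp (-((k:ℂ)+1)^b * ((x:ℂ) + 2*(Real.pi:ℂ)*Complex.I*(s:ℂ)))‖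
      = y * ‖∑' k : ℕ, Complex.exp (-((k:ℂ)+1)^b * ((x:ℂ) + 2*(Real.pi:ℂ)*Complex.I*(s:ℂ)))‖ := by
        rw [norm_mul, Complex.norm_real, Real.norm_eq_abs, abs_of_nonneg hy0.le]
    _ ≤ y * ((ε/8) * (2/y) + N₀) := mul_le_mul_of_nonneg_left htsum hy0.le
    _ = ε/4 + y * N₀ := by
        field_simp
        ring
    _ < ε := by
        have h10 : y * N₀ ≤ (ε/(2*((N₀:ℝ)+1))) * N₀ :=
          mul_le_mul_of_nonneg_right hyε hN0R
        have h11 : (ε/(2*((N₀:ℝ)+1))) * N₀ ≤ ε/2 := by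
          rw [div_mul_eq_mul_div, div_le_div_iff₀ (by positivity) (by norm_num)]
          nlinarith
        linarith
end

section
/- Fix an integer N ≥ 1. Let (h_n)_{n≥1} be a sequence of locally integrable functions h_n : ℝ → [0, ∞) such that for every box B = ∏_{i=1}^N [a_i, b_i] ⊂ ℝ^N, ∫_B h_n(x₁ + ⋯ + x_N) dx₁⋯dx_N → vol(B) as n → ∞. Then for all real α < β and every continuous function f : [α, β] → ℝ, ∫_α^β h_n(s)·f(s) ds → ∫_α^β f(s) ds as n → ∞; i.e. h_n → 1 in the dual of C[α, β]. -/
open Filter MeasureTheory Set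
open scoped ENNReal

lemma aux_meas (m : ℕ) :
    Measurable (fun y : ℝ × (Fin m → ℝ) => y.1 + ∑ i, y.2 i) := by fun_prop

lemma aux_qmp (m : ℕ) :
    Measure.QuasiMeasurePreserving (fun y : ℝ × (Fin m → ℝ) => y.1 + ∑ i, y.2 i)
      volume volume := by
  refine ⟨aux_meas m, Measure.AbsolutelyContinuous.mk fun s hs h0 => ?_⟩
  rw [Measure.map_apply (aux_meas m) hs]
  have hps : MeasurableSet ((fun y : ℝ × (Fin m → ℝ) => y.1 + ∑ i, y.2 i) ⁻¹' s) :=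
    (aux_meas m) hs
  rw [Measure.volume_eq_prod, Measure.prod_apply_symm hps]
  have : ∀ t : Fin m → ℝ,
      (volume ((fun x : ℝ => (x, t)) ⁻¹' ((fun y : ℝ × (Fin m → ℝ) => y.1 + ∑ i, y.2 i) ⁻¹' s))) = 0 := by
    intro t
    have : ((fun x : ℝ => (x, t)) ⁻¹' ((fun y : ℝ × (Fin m → ℝ) => y.1 + ∑ i, y.2 i) ⁻¹' s))
        = (fun x : ℝ => x + ∑ i, t i) ⁻¹' s := rfl
    rw [this, measure_preimage_add_right volume _ s, h0]
  simp [this]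

lemma aux_trans (g : ℝ → ℝ≥0∞) (A B u : ℝ) :
    ∫⁻ s in Icc A B, g (s + u) ∂volume = ∫⁻ s in Icc (A + u) (B + u), g s ∂volume := by
  rw [← lintegral_indicator measurableSet_Icc, ← lintegral_indicator measurableSet_Icc]
  have heq : ∀ s : ℝ, (Icc A B).indicator (fun s => g (s + u)) s
      = (Icc (A + u) (B + u)).indicator g (s + u) := by
    intro s
    by_cases hs : s ∈ Icc A B
    · rw [indicator_of_mem hs, indicator_of_mem]
      exact ⟨by linarith [hs.1], by linarith [hs.2]⟩
    · rw [indicator_of_notMem hs, indicator_of_notMem]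
      intro hc
      exact hs ⟨by linarith [hc.1], by linarith [hc.2]⟩
  simp_rw [heq]
  exact lintegral_add_right_eq_self _ u

lemma aux_sandwich (m : ℕ) {g : ℝ → ℝ≥0∞} (hg : AEMeasurable g volume)
    (A B δ : ℝ) (hδ : 0 ≤ δ) :
    ENNReal.ofReal δ ^ m * (∫⁻ s in Icc (A + m * δ) B, g s) ≤
      (∫⁻ y in (Icc A B) ×ˢ (Icc (0 : Fin m → ℝ) (fun _ => δ)),
        g (y.1 + ∑ i, y.2 i) ∂(volume.prod volume)) ∧
    (∫⁻ y in (Icc A B) ×ˢ (Icc (0 : Fin m → ℝ) (fun _ => δ)),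
        g (y.1 + ∑ i, y.2 i) ∂(volume.prod volume)) ≤
      ENNReal.ofReal δ ^ m * (∫⁻ s in Icc A (B + m * δ), g s) := by
  set T : Set (Fin m → ℝ) := Icc (0 : Fin m → ℝ) (fun _ => δ) with hT
  have hvolT : volume T = ENNReal.ofReal δ ^ m := by
    rw [hT, Real.volume_Icc_pi]
    simp
  have hrw : (volume.prod volume).restrict ((Icc A B) ×ˢ T)
      = (volume.restrict (Icc A B)).prod (volume.restrict T) :=
    (Measure.prod_restrict _ _).symm
  have hF : AEMeasurable (fun y : ℝ × (Fin m → ℝ) => g (y.1 + ∑ i, y.2 i))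
      ((volume.restrict (Icc A B)).prod (volume.restrict T)) := by
    have h0 : AEMeasurable (fun y : ℝ × (Fin m → ℝ) => g (y.1 + ∑ i, y.2 i))
        (volume.prod volume) := hg.comp_quasiMeasurePreserving (aux_qmp m)
    refine h0.mono' ?_
    rw [Measure.prod_restrict]
    exact Measure.absolutelyContinuous_of_le Measure.restrict_le_self
  have key : (∫⁻ y in (Icc A B) ×ˢ T,
        g (y.1 + ∑ i, y.2 i) ∂(volume.prod volume))
      = ∫⁻ t in T, ∫⁻ s in Icc (A + ∑ i, t i) (B + ∑ i, t i), g s ∂volume ∂volume := by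
    rw [hrw, lintegral_prod_symm _ hF]
    refine lintegral_congr fun t => ?_
    exact aux_trans g A B (∑ i, t i)
  have hsum : ∀ t ∈ T, (0:ℝ) ≤ ∑ i, t i ∧ (∑ i, t i) ≤ m * δ := by
    intro t ht
    constructor
    · exact Finset.sum_nonneg fun i _ => ht.1 i
    · calc (∑ i, t i) ≤ ∑ _i : Fin m, δ := Finset.sum_le_sum fun i _ => ht.2 i
        _ = m * δ := by simp [Finset.sum_const, nsmul_eq_mul]
  constructor
  · rw [key]
    calc ENNReal.ofReal δ ^ m * (∫⁻ s in Icc (A + m * δ) B, g s)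
        = ∫⁻ _t in T, (∫⁻ s in Icc (A + m * δ) B, g s) ∂volume := by
          rw [setLIntegral_const, hvolT, mul_comm]
      _ ≤ ∫⁻ t in T, ∫⁻ s in Icc (A + ∑ i, t i) (B + ∑ i, t i), g s ∂volume ∂volume := by
          refine lintegral_mono_ae (ae_restrict_of_forall_mem measurableSet_Icc fun t ht => ?_)
          refine lintegral_mono' (Measure.restrict_mono ?_ le_rfl) le_rfl
          intro x hx
          obtain ⟨h1, h2⟩ := hsum t ht
          exact ⟨by linarith [hx.1], by linarith [hx.2]⟩
  · rw [key]
    calc (∫⁻ t in T, ∫⁻ s in Icc (A + ∑ i, t i) (B + ∑ i, t i), g s ∂volume ∂volume)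
        ≤ ∫⁻ _t in T, (∫⁻ s in Icc A (B + m * δ), g s) ∂volume := by
          refine lintegral_mono_ae (ae_restrict_of_forall_mem measurableSet_Icc fun t ht => ?_)
          refine lintegral_mono' (Measure.restrict_mono ?_ le_rfl) le_rfl
          intro x hx
          obtain ⟨h1, h2⟩ := hsum t ht
          exact ⟨by linarith [hx.1], by linarith [hx.2]⟩
      _ = ENNReal.ofReal δ ^ m * (∫⁻ s in Icc A (B + m * δ), g s) := by
          rw [setLIntegral_const, hvolT, mul_comm]

lemma aux_box (m : ℕ) {h : ℝ → ℝ} (hm : AEStronglyMeasurable h volume) (hnn : ∀ x, 0 ≤ h x)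
    (A B δ : ℝ) :
    (∫ x in Icc (Fin.cons A (0 : Fin m → ℝ)) (Fin.cons B (fun _ => δ)), h (∑ i, x i))
      = (∫⁻ y in (Icc A B) ×ˢ (Icc (0 : Fin m → ℝ) (fun _ => δ)),
          ENNReal.ofReal (h (y.1 + ∑ i, y.2 i)) ∂(volume.prod volume)).toReal := by
  classical
  set e := MeasurableEquiv.piFinSuccAbove (fun _ : Fin (m+1) => ℝ) 0 with he
  have mp : MeasurePreserving e volume volume := volume_preserving_piFinSuccAbove _ 0
  have hcomp : (fun x : Fin (m+1) → ℝ => (∑ i, x i)) =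
      (fun y : ℝ × (Fin m → ℝ) => y.1 + ∑ i, y.2 i) ∘ e := by
    funext x
    simp [he, MeasurableEquiv.piFinSuccAbove_apply, Fin.sum_univ_succ, Fin.succAbove_zero,
      Function.comp, Fin.tail]
  have qmp_sum : Measure.QuasiMeasurePreserving (fun x : Fin (m+1) → ℝ => ∑ i, x i)
      volume volume := by
    rw [hcomp]
    exact (aux_qmp m).comp mp.quasiMeasurePreserving
  have hmeas : AEStronglyMeasurable (fun x : Fin (m+1) → ℝ => h (∑ i, x i)) volume :=
    hm.comp_quasiMeasurePreserving qmp_sum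
  have hpre : e ⁻¹' ((Icc A B) ×ˢ (Icc (0 : Fin m → ℝ) (fun _ => δ)))
      = Icc (Fin.cons A (0 : Fin m → ℝ)) (Fin.cons B (fun _ => δ)) := by
    ext x
    simp only [mem_preimage, mem_prod, mem_Icc, he, MeasurableEquiv.piFinSuccAbove_apply,
      Fin.cons_le, Fin.le_cons, Fin.succAbove_zero, Fin.cons_zero, Fin.tail]
    tauto
  rw [integral_eq_lintegral_of_nonneg_ae (Eventually.of_forall fun x => hnn _)
    hmeas.restrict]
  congr 1
  rw [← Measure.volume_eq_prod, ← hpre]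
  rw [← MeasurePreserving.setLIntegral_comp_preimage_emb mp e.measurableEmbedding]
  exact lintegral_congr fun a => by rw [congrFun hcomp a]; rfl

lemma aux_ineq (m : ℕ) {h : ℝ → ℝ} (hnn : ∀ x, 0 ≤ h x) (hloc : LocallyIntegrable h)
    (A B δ : ℝ) (hδ : 0 ≤ δ) :
    δ ^ m * ∫ s in Icc (A + m * δ) B, h s ≤
      (∫ x in Icc (Fin.cons A (0 : Fin m → ℝ)) (Fin.cons B (fun _ => δ)), h (∑ i, x i)) ∧
    (∫ x in Icc (Fin.cons A (0 : Fin m → ℝ)) (Fin.cons B (fun _ => δ)), h (∑ i, x i)) ≤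
      δ ^ m * ∫ s in Icc A (B + m * δ), h s := by
  set g : ℝ → ℝ≥0∞ := fun s => ENNReal.ofReal (h s) with hgdef
  have hg : AEMeasurable g volume := hloc.aestronglyMeasurable.aemeasurable.ennreal_ofReal
  obtain ⟨hlo, hup⟩ := aux_sandwich m hg A B δ hδ
  set P : ℝ≥0∞ := ENNReal.ofReal δ ^ m with hP
  have hPfin : P ≠ ∞ := by
    simp [hP, ENNReal.pow_ne_top, ENNReal.ofReal_ne_top]
  have hPtoReal : P.toReal = δ ^ m := by
    simp [hP, ENNReal.toReal_pow, ENNReal.toReal_ofReal hδ]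
  have h1d : ∀ c d : ℝ, (∫ s in Icc c d, h s) = (∫⁻ s in Icc c d, g s).toReal := fun c d =>
    integral_eq_lintegral_of_nonneg_ae (Eventually.of_forall fun x => hnn x)
      hloc.aestronglyMeasurable.restrict
  have hfin : ∀ c d : ℝ, (∫⁻ s in Icc c d, g s) ≠ ∞ := fun c d =>
    (Integrable.lintegral_lt_top (hloc.integrableOn_isCompact isCompact_Icc)).ne
  have hKfin : (∫⁻ y in (Icc A B) ×ˢ (Icc (0 : Fin m → ℝ) (fun _ => δ)),
      g (y.1 + ∑ i, y.2 i) ∂(volume.prod volume)) ≠ ∞ :=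
    (lt_of_le_of_lt hup (ENNReal.mul_lt_top hPfin.lt_top (hfin _ _).lt_top)).ne
  rw [aux_box m hloc.aestronglyMeasurable hnn A B δ, h1d, h1d]
  constructor
  · calc δ ^ m * (∫⁻ s in Icc (A + m * δ) B, g s).toReal
        = (P * ∫⁻ s in Icc (A + m * δ) B, g s).toReal := by
          rw [ENNReal.toReal_mul, hPtoReal]
      _ ≤ _ := ENNReal.toReal_mono hKfin hlo
  · calc (∫⁻ y in (Icc A B) ×ˢ (Icc (0 : Fin m → ℝ) (fun _ => δ)),
        g (y.1 + ∑ i, y.2 i) ∂(volume.prod volume)).toReal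
        ≤ (P * ∫⁻ s in Icc A (B + m * δ), g s).toReal :=
          ENNReal.toReal_mono (ENNReal.mul_ne_top hPfin (hfin _ _)) hup
      _ = δ ^ m * (∫⁻ s in Icc A (B + m * δ), g s).toReal := by
          rw [ENNReal.toReal_mul, hPtoReal]

lemma aux_stepA (m : ℕ) (h : ℕ → ℝ → ℝ)
    (hnn : ∀ n x, 0 ≤ h n x) (hloc : ∀ n, LocallyIntegrable (h n))
    (hbox : ∀ a b : Fin (m+1) → ℝ, (∀ i, a i ≤ b i) →
      Tendsto (fun n : ℕ => ∫ x in Icc a b, h n (∑ i, x i)) atTop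
        (nhds (∏ i, (b i - a i))))
    (a b : ℝ) (hab : a ≤ b) :
    Tendsto (fun n => ∫ s in Icc a b, h n s) atTop (nhds (b - a)) := by
  have hprod : ∀ A B : ℝ, ∀ δ : ℝ,
      (∏ i, (Fin.cons B (fun _ => δ) i - Fin.cons A (0 : Fin m → ℝ) i)) = (B - A) * δ ^ m := by
    intro A B δ
    rw [Fin.prod_univ_succ]
    simp
  rw [Metric.tendsto_atTop]
  intro ε hε
  set δ : ℝ := ε / (4 * (m + 1)) with hδdef
  have hδpos : 0 < δ := by positivity
  have hmδ : (m : ℝ) * δ ≤ ε / 4 := by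
    rw [hδdef, mul_div_assoc']
    rw [div_le_div_iff₀ (by positivity) (by norm_num)]
    nlinarith [hε.le]
  have Hnn : ∀ n, 0 ≤ ∫ s in Icc a b, h n s := fun n =>
    setIntegral_nonneg measurableSet_Icc fun x _ => hnn n x
  have hmδ0 : 0 ≤ (m : ℝ) * δ := by positivity
  have hpow : (0:ℝ) < δ ^ m := by positivity
  -- upper bound event
  have hle1 : ∀ i : Fin (m+1),
      (Fin.cons (a - m*δ) (0 : Fin m → ℝ) : Fin (m+1) → ℝ) i ≤ (Fin.cons b (fun _ => δ) : Fin (m+1) → ℝ) i := by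
    refine Fin.cases ?_ ?_
    · simpa using by linarith
    · intro j; simpa using hδpos.le
  have T1 := hbox _ _ hle1
  rw [hprod (a - m*δ) b δ] at T1
  have hev_up : ∀ᶠ n in atTop,
      (∫ s in Icc a b, h n s) < b - a + (m*δ + ε/4) := by
    have hlt : (b - (a - m*δ)) * δ ^ m < (b - a + (m*δ + ε/4)) * δ ^ m := by
      have : (b - (a - m*δ)) < b - a + (m*δ + ε/4) := by linarith
      exact (mul_lt_mul_iff_left₀ hpow).mpr this
    filter_upwards [T1.eventually_lt_const hlt] with n hn
    have hI := (aux_ineq m (hnn n) (hloc n) (a - m*δ) b δ hδpos.le).1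
    have harw : a - ↑m*δ + ↑m*δ = a := by ring
    rw [harw] at hI
    have h3 := hI.trans_lt hn
    exact lt_of_mul_lt_mul_left (h3.trans_eq (mul_comm _ _)) hpow.le
  have hev_low : ∀ᶠ n in atTop,
      b - a - (m*δ + ε/4) < ∫ s in Icc a b, h n s := by
    by_cases hc : a ≤ b - ↑m*δ
    · have hle2 : ∀ i : Fin (m+1),
          (Fin.cons a (0 : Fin m → ℝ) : Fin (m+1) → ℝ) i ≤ (Fin.cons (b - ↑m*δ) (fun _ => δ) : Fin (m+1) → ℝ) i := by
        refine Fin.cases ?_ ?_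
        · simpa using hc
        · intro j; simpa using hδpos.le
      have T2 := hbox _ _ hle2
      rw [hprod a (b - ↑m*δ) δ] at T2
      have hlt : (b - a - (m*δ + ε/4)) * δ ^ m < (b - ↑m*δ - a) * δ ^ m := by
        have : b - a - (m*δ + ε/4) < b - ↑m*δ - a := by linarith
        exact (mul_lt_mul_iff_left₀ hpow).mpr this
      filter_upwards [T2.eventually_const_lt hlt] with n hn
      have hI := (aux_ineq m (hnn n) (hloc n) a (b - ↑m*δ) δ hδpos.le).2
      have harw : b - ↑m*δ + ↑m*δ = b := by ring
      rw [harw] at hI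
      have h3 := hn.trans_le hI
      have h4 := lt_of_mul_lt_mul_left ((mul_comm _ _).trans_lt h3 :
        δ ^ m * (b - a - (↑m * δ + ε / 4)) < δ ^ m * ∫ s in Icc a b, h n s) hpow.le
      linarith
    · filter_upwards with n
      have : b - a < ↑m * δ := by linarith [not_le.mp hc]
      have := Hnn n
      linarith
  rw [eventually_atTop] at hev_up hev_low
  obtain ⟨N1, hN1⟩ := hev_up
  obtain ⟨N2, hN2⟩ := hev_low
  refine ⟨max N1 N2, fun n hn => ?_⟩
  have h1 := hN1 n (le_trans (le_max_left _ _) hn)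
  have h2 := hN2 n (le_trans (le_max_right _ _) hn)
  rw [Real.dist_eq, abs_sub_lt_iff]
  constructor <;> linarith

lemma aux_stepB (h : ℕ → ℝ → ℝ) (hnn : ∀ n x, 0 ≤ h n x) (hloc : ∀ n, LocallyIntegrable (h n))
    (hH : ∀ a b : ℝ, a ≤ b → Tendsto (fun n => ∫ s in a..b, h n s) atTop (nhds (b - a)))
    (α β : ℝ) (hαβ : α < β) (f : ℝ → ℝ) (hf : ContinuousOn f (Icc α β)) :
    Tendsto (fun n => ∫ s in α..β, h n s * f s) atTop (nhds (∫ s in α..β, f s)) := by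
  -- integrability of h n on intervals
  have hhi : ∀ n (c d : ℝ), c ≤ d → IntervalIntegrable (h n) volume c d := by
    intro n c d hcd
    exact (intervalIntegrable_iff_integrableOn_Icc_of_le hcd).mpr
      ((hloc n).integrableOn_isCompact isCompact_Icc)
  -- integrability of h n * f on subintervals of [α, β]
  have hmi : ∀ n (c d : ℝ), c ≤ d → Icc c d ⊆ Icc α β →
      IntervalIntegrable (fun s => h n s * f s) volume c d := by
    intro n c d hcd hsub
    rw [intervalIntegrable_iff_integrableOn_Icc_of_le hcd]
    obtain ⟨M, hM⟩ := isCompact_Icc.exists_bound_of_continuousOn hf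
    have hb : Integrable (fun s => f s * h n s) (volume.restrict (Icc c d)) := by
      refine Integrable.bdd_mul (c := M)
        ((hloc n).integrableOn_isCompact isCompact_Icc)
        ((hf.mono hsub).aestronglyMeasurable measurableSet_Icc) ?_
      exact ae_restrict_of_forall_mem measurableSet_Icc fun x hx => hM x (hsub hx)
    exact hb.congr (ae_of_all _ fun x => mul_comm _ _)
  have hfi : ∀ (c d : ℝ), c ≤ d → Icc c d ⊆ Icc α β → IntervalIntegrable f volume c d := by
    intro c d hcd hsub
    have : ContinuousOn f (uIcc c d) := by rw [uIcc_of_le hcd]; exact hf.mono hsub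
    exact this.intervalIntegrable
  rw [Metric.tendsto_atTop]
  intro ε hε
  have hC : (0:ℝ) < β - α := by linarith
  set ε' : ℝ := ε / (4 * ((β - α) + 1)) with hε'def
  have hε' : 0 < ε' := by positivity
  obtain ⟨d, hd0, hdc⟩ := Metric.uniformContinuousOn_iff_le.mp
    (isCompact_Icc.uniformContinuousOn_of_continuous hf) ε' hε'
  obtain ⟨k, hk⟩ := exists_nat_gt ((β - α) / d)
  have hkpos : 0 < (k:ℝ) := lt_of_le_of_lt (by positivity) hk
  set Δ : ℝ := (β - α) / k with hΔdef
  have hΔ0 : 0 < Δ := by positivity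
  have hΔd : Δ ≤ d := by
    rw [hΔdef, div_le_iff₀ hkpos]
    have := (div_lt_iff₀ hd0).mp hk
    nlinarith
  set t : ℕ → ℝ := fun j => α + j * Δ with htdef
  have ht0 : t 0 = α := by simp [htdef]
  have htk : t k = β := by
    rw [htdef]
    simp only
    rw [hΔdef]
    field_simp
    ring
  have htsucc : ∀ j : ℕ, t (j+1) = t j + Δ := by
    intro j; simp only [htdef]; push_cast; ring
  have htmono : ∀ j : ℕ, t j ≤ t (j+1) := fun j => by rw [htsucc]; linarith
  have htmem : ∀ j : ℕ, j ≤ k → t j ∈ Icc α β := by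
    intro j hj
    have hcast : (j:ℝ) ≤ k := Nat.cast_le.mpr hj
    constructor
    · have h0 : 0 ≤ (j:ℝ) * Δ := by positivity
      simp only [htdef]; linarith
    · have : (j:ℝ) * Δ ≤ k * Δ := mul_le_mul_of_nonneg_right hcast hΔ0.le
      have hk' : (k:ℝ) * Δ = β - α := by rw [hΔdef]; field_simp
      simp only [htdef]; linarith
  have hsub : ∀ j : ℕ, j < k → Icc (t j) (t (j+1)) ⊆ Icc α β := by
    intro j hj x hx
    exact ⟨le_trans (htmem j hj.le).1 hx.1, le_trans hx.2 (htmem (j+1) hj).2⟩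
  -- decompositions
  have hFdec : ∀ n, (∫ s in α..β, h n s * f s)
      = ∑ j ∈ Finset.range k, ∫ s in t j..t (j+1), h n s * f s := by
    intro n
    have := intervalIntegral.sum_integral_adjacent_intervals
      (f := fun s => h n s * f s) (μ := volume) (a := t) (n := k)
      (fun j hj => hmi n (t j) (t (j+1)) (htmono j) (hsub j hj))
    rw [ht0, htk] at this
    exact this.symm
  have hfdec : (∫ s in α..β, f s) = ∑ j ∈ Finset.range k, ∫ s in t j..t (j+1), f s := by
    have := intervalIntegral.sum_integral_adjacent_intervals
      (f := f) (μ := volume) (a := t) (n := k)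
      (fun j hj => hfi (t j) (t (j+1)) (htmono j) (hsub j hj))
    rw [ht0, htk] at this
    exact this.symm
  have hhdec : ∀ n, (∫ s in α..β, h n s)
      = ∑ j ∈ Finset.range k, ∫ s in t j..t (j+1), h n s := by
    intro n
    have := intervalIntegral.sum_integral_adjacent_intervals
      (f := h n) (μ := volume) (a := t) (n := k)
      (fun j hj => hhi n (t j) (t (j+1)) (htmono j))
    rw [ht0, htk] at this
    exact this.symm
  -- termwise estimates
  have hterm : ∀ n, ∀ j ∈ Finset.range k,
      |(∫ s in t j..t (j+1), h n s * f s) - f (t j) * ∫ s in t j..t (j+1), h n s|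
        ≤ ε' * ∫ s in t j..t (j+1), h n s := by
    intro n j hj
    rw [Finset.mem_range] at hj
    have hji := hhi n (t j) (t (j+1)) (htmono j)
    have hmj := hmi n (t j) (t (j+1)) (htmono j) (hsub j hj)
    rw [← intervalIntegral.integral_const_mul]
    rw [← intervalIntegral.integral_sub hmj (hji.const_mul _)]
    calc |∫ s in t j..t (j+1), (h n s * f s - f (t j) * h n s)|
        ≤ ∫ s in t j..t (j+1), |h n s * f s - f (t j) * h n s| :=
          intervalIntegral.abs_integral_le_integral_abs (htmono j)
      _ ≤ ∫ s in t j..t (j+1), ε' * h n s := by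
          refine intervalIntegral.integral_mono_on (htmono j)
            (hmj.sub (hji.const_mul _)).abs (hji.const_mul _) ?_
          intro s hs
          have h1 : h n s * f s - f (t j) * h n s = h n s * (f s - f (t j)) := by ring
          rw [h1, abs_mul, abs_of_nonneg (hnn n s)]
          have hsmem : s ∈ Icc α β := hsub j hj hs
          have htjmem : t j ∈ Icc α β := htmem j hj.le
          have hdist : dist s (t j) ≤ d := by
            rw [Real.dist_eq, abs_of_nonneg (by linarith [hs.1])]
            have := hs.2
            rw [htsucc j] at this
            linarith
          have := hdc s hsmem (t j) htjmem hdist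
          rw [Real.dist_eq] at this
          calc h n s * |f s - f (t j)| ≤ h n s * ε' :=
                mul_le_mul_of_nonneg_left this (hnn n s)
            _ = ε' * h n s := mul_comm _ _
      _ = ε' * ∫ s in t j..t (j+1), h n s := intervalIntegral.integral_const_mul _ _
  have hterm2 : ∀ j ∈ Finset.range k,
      |(∫ s in t j..t (j+1), f s) - f (t j) * Δ| ≤ ε' * Δ := by
    intro j hj
    rw [Finset.mem_range] at hj
    have hfj := hfi (t j) (t (j+1)) (htmono j) (hsub j hj)
    have hconst : f (t j) * Δ = ∫ _s in t j..t (j+1), f (t j) := by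
      rw [intervalIntegral.integral_const, htsucc j, smul_eq_mul]
      ring
    rw [hconst, ← intervalIntegral.integral_sub hfj (intervalIntegrable_const)]
    calc |∫ s in t j..t (j+1), (f s - f (t j))|
        ≤ ∫ s in t j..t (j+1), |f s - f (t j)| :=
          intervalIntegral.abs_integral_le_integral_abs (htmono j)
      _ ≤ ∫ _s in t j..t (j+1), ε' := by
          refine intervalIntegral.integral_mono_on (htmono j)
            (hfj.sub intervalIntegrable_const).abs intervalIntegrable_const ?_
          intro s hs
          have hsmem : s ∈ Icc α β := hsub j hj hs
          have htjmem : t j ∈ Icc α β := htmem j hj.le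
          have hdist : dist s (t j) ≤ d := by
            rw [Real.dist_eq, abs_of_nonneg (by linarith [hs.1])]
            have := hs.2
            rw [htsucc j] at this
            linarith
          have := hdc s hsmem (t j) htjmem hdist
          rw [Real.dist_eq] at this
          exact this
      _ = ε' * Δ := by
          rw [intervalIntegral.integral_const, htsucc j, smul_eq_mul]
          ring
  -- limits
  set S : ℕ → ℝ := fun n => ∑ j ∈ Finset.range k, f (t j) * ∫ s in t j..t (j+1), h n s with hSdef
  set L : ℝ := ∑ j ∈ Finset.range k, f (t j) * Δ with hLdef
  have hSL : Tendsto S atTop (nhds L) := by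
    rw [hSdef, hLdef]
    refine tendsto_finset_sum _ fun j hj => ?_
    have := (hH (t j) (t (j+1)) (htmono j)).const_mul (f (t j))
    have heq : t (j+1) - t j = Δ := by rw [htsucc j]; ring
    rw [heq] at this
    exact this
  have hHlim := hH α β hαβ.le
  have hev1 : ∀ᶠ n in atTop, |S n - L| < ε / 4 := by
    have := Metric.tendsto_atTop.mp hSL
    obtain ⟨N, hN⟩ := this (ε/4) (by positivity)
    rw [eventually_atTop]
    exact ⟨N, fun n hn => by rw [← Real.dist_eq]; exact hN n hn⟩
  have hev2 : ∀ᶠ n in atTop, (∫ s in α..β, h n s) < (β - α) + 1 :=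
    hHlim.eventually_lt_const (by linarith)
  rw [eventually_atTop] at hev1 hev2
  obtain ⟨N1, hN1⟩ := hev1
  obtain ⟨N2, hN2⟩ := hev2
  refine ⟨max N1 N2, fun n hn => ?_⟩
  have h1 := hN1 n (le_trans (le_max_left _ _) hn)
  have h2 := hN2 n (le_trans (le_max_right _ _) hn)
  have hHnn : 0 ≤ ∫ s in α..β, h n s := by
    rw [intervalIntegral.integral_of_le hαβ.le]
    exact setIntegral_nonneg measurableSet_Ioc fun x _ => hnn n x
  -- |F n - S n| ≤ ε' * ∫ h n
  have hFS : |(∫ s in α..β, h n s * f s) - S n| ≤ ε' * ∫ s in α..β, h n s := by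
    rw [hFdec n, hSdef]
    calc |∑ j ∈ Finset.range k, (∫ s in t j..t (j+1), h n s * f s)
          - ∑ j ∈ Finset.range k, f (t j) * ∫ s in t j..t (j+1), h n s|
        = |∑ j ∈ Finset.range k, ((∫ s in t j..t (j+1), h n s * f s)
          - f (t j) * ∫ s in t j..t (j+1), h n s)| := by rw [Finset.sum_sub_distrib]
      _ ≤ ∑ j ∈ Finset.range k, |(∫ s in t j..t (j+1), h n s * f s)
          - f (t j) * ∫ s in t j..t (j+1), h n s| := Finset.abs_sum_le_sum_abs _ _
      _ ≤ ∑ j ∈ Finset.range k, ε' * ∫ s in t j..t (j+1), h n s :=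
          Finset.sum_le_sum (hterm n)
      _ = ε' * ∫ s in α..β, h n s := by rw [← Finset.mul_sum, ← hhdec n]
  have hfL : |(∫ s in α..β, f s) - L| ≤ ε' * (β - α) := by
    rw [hfdec, hLdef]
    calc |∑ j ∈ Finset.range k, (∫ s in t j..t (j+1), f s)
          - ∑ j ∈ Finset.range k, f (t j) * Δ|
        = |∑ j ∈ Finset.range k, ((∫ s in t j..t (j+1), f s) - f (t j) * Δ)| := by
          rw [Finset.sum_sub_distrib]
      _ ≤ ∑ j ∈ Finset.range k, |(∫ s in t j..t (j+1), f s) - f (t j) * Δ| :=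
          Finset.abs_sum_le_sum_abs _ _
      _ ≤ ∑ j ∈ Finset.range k, ε' * Δ := Finset.sum_le_sum hterm2
      _ = ε' * ((k:ℝ) * Δ) := by rw [Finset.sum_const, Finset.card_range]; push_cast; ring
      _ = ε' * (β - α) := by rw [hΔdef]; field_simp
  have hkey : ε' * ((β - α) + 1) = ε / 4 := by
    rw [hε'def]; field_simp
  rw [Real.dist_eq]
  have hb1 : ε' * (∫ s in α..β, h n s) ≤ ε / 4 := by
    calc ε' * (∫ s in α..β, h n s) ≤ ε' * ((β - α) + 1) :=
          mul_le_mul_of_nonneg_left h2.le hε'.le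
      _ = ε / 4 := hkey
  have hb2 : ε' * (β - α) ≤ ε / 4 := by
    calc ε' * (β - α) ≤ ε' * ((β - α) + 1) := by nlinarith
      _ = ε / 4 := hkey
  calc |(∫ s in α..β, h n s * f s) - ∫ s in α..β, f s|
      ≤ |(∫ s in α..β, h n s * f s) - S n| + |S n - L| + |L - ∫ s in α..β, f s| := by
        have := abs_sub_le ((∫ s in α..β, h n s * f s)) (S n) (∫ s in α..β, f s)
        have h4 := abs_sub_le (S n) L (∫ s in α..β, f s)
        linarith
    _ < ε := by
        have h5 : |L - ∫ s in α..β, f s| = |(∫ s in α..β, f s) - L| := abs_sub_comm _ _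
        rw [h5]
        linarith

/-- If nonnegative locally integrable `h_n : ℝ → [0,∞)` satisfy
`∫_B h_n(x₁+⋯+x_N) dx → vol(B)` for every box `B ⊂ ℝ^N`, then `h_n → 1` in the dual of
`C[α,β]` for every interval `[α,β]`. -/
theorem stmt18 (N : ℕ) (hN : 1 ≤ N) (h : ℕ → ℝ → ℝ)
    (hnn : ∀ n : ℕ, ∀ x : ℝ, 0 ≤ h n x)
    (hloc : ∀ n : ℕ, LocallyIntegrable (h n))
    (hbox : ∀ a b : Fin N → ℝ, (∀ i, a i ≤ b i) →
      Tendsto (fun n : ℕ => ∫ x in Set.Icc a b, h n (∑ i, x i)) atTop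
        (nhds (∏ i, (b i - a i)))) :
    ∀ α β : ℝ, α < β → ∀ f : ℝ → ℝ, ContinuousOn f (Set.Icc α β) →
      Tendsto (fun n : ℕ => ∫ s in α..β, h n s * f s) atTop
        (nhds (∫ s in α..β, f s)) := by
  obtain ⟨m, rfl⟩ : ∃ m, N = m + 1 := ⟨N - 1, by omega⟩
  intro α β hαβ f hf
  refine aux_stepB h hnn hloc ?_ α β hαβ f hf
  intro a b hab
  have hA := aux_stepA m h hnn hloc hbox a b hab
  have heq : ∀ n, (∫ s in a..b, h n s) = ∫ s in Icc a b, h n s := by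
    intro n
    rw [intervalIntegral.integral_of_le hab, integral_Icc_eq_integral_Ioc]
  simp_rw [heq]
  exact hA
end
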